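/- arXiv:1211.0658 — 12 statements merged into one kernel-verified Lean document; each statement's English description precedes it below -/
import Mathlib

section
/- Let n ≥ 1 be an integer with n ≡ 3 (mod 6) such that 4n+1 is prime. Then there is no splitting ℤ_{4n+1} = (M,S) with multiplier set M = {-1,1,2,3} and |S| = n. (Equivalently, the (3,1,n)-quasi-cross does not lattice tile ℝⁿ for such n.) -/
/-!
Multiplying together all the products `m * s` of a splitting of `ℤ_p`, `p = 4n + 1`, gives the
product of all nonzero residues, which is `-1` by Wilson; hence `(-6)^n (∏ S)^4 = -1`, and since
`n` is odd, `6` is a square mod `p`. As `p ≡ 1 (mod 12)`, quadratic reciprocity makes `3` a square,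
so `2 = 6 / 3` is a square too, contradicting `p ≡ 5 (mod 8)`.
-/

/-- `(M, S)` is a splitting of `ℤ_q`: `M ⊆ ℤ \ {0}`, and the products `m·s`
(for `m ∈ M`, `s ∈ S`) are pairwise distinct and cover exactly the nonzero
elements of `ZMod q`. -/
def IsSplitting (q : ℕ) (M : Finset ℤ) (S : Finset (ZMod q)) : Prop :=
  (0 : ℤ) ∉ M ∧
  Set.InjOn (fun p : ℤ × ZMod q => (p.1 : ZMod q) * p.2) ↑(M ×ˢ S) ∧
  (fun p : ℤ × ZMod q => (p.1 : ZMod q) * p.2) '' ↑(M ×ˢ S) = {a : ZMod q | a ≠ 0}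

open Finset

theorem FiniteField.prod_erase_zero_eq_neg_one {K : Type*} [Field K] [Fintype K] [DecidableEq K] :
    ∏ x ∈ univ.erase (0 : K), x = -1 := by
  have h := congrArg Units.val (FiniteField.prod_univ_units_id_eq_neg_one (K := K))
  push_cast at h
  rw [← h]
  exact prod_bij' (fun x hx => Units.mk0 x (ne_of_mem_erase hx)) (fun u _ => u)
    (by simp) (by simp) (by simp) (by simp) (by simp)

theorem isSquare_of_pow_mul_sq_eq_one {α : Type*} [DivisionCommMonoid α] {a b : α} {n : ℕ}
    (hn : Odd n) (h : a ^ n * b ^ 2 = 1) : IsSquare a := by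
  obtain ⟨k, rfl⟩ := hn
  have h' : a * (a ^ k * b) ^ 2 = 1 := by
    rw [← h, mul_pow, ← pow_mul, mul_comm k, ← mul_assoc, ← pow_succ']
  rw [eq_inv_of_mul_eq_one_left h']
  exact (IsSquare.sq _).inv

namespace IsSplitting

variable {q : ℕ} {M : Finset ℤ} {S : Finset (ZMod q)}

theorem image_mul_eq_univ_erase_zero [NeZero q] (h : IsSplitting q M S) :
    (M ×ˢ S).image (fun p : ℤ × ZMod q => (p.1 : ZMod q) * p.2) = univ.erase 0 := by
  apply coe_injective
  rw [coe_image, h.2.2]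
  ext a
  simp

theorem prod_pow_mul_prod_pow [NeZero q] (h : IsSplitting q M S) :
    (∏ m ∈ M, (m : ZMod q)) ^ #S * (∏ s ∈ S, s) ^ #M = ∏ a ∈ univ.erase 0, a := by
  rw [← h.image_mul_eq_univ_erase_zero, prod_image h.2.1, prod_product,
    prod_congr rfl fun x _ => prod_mul_distrib, prod_mul_distrib]
  simp only [prod_const, prod_pow]

end IsSplitting

namespace ZMod

variable {p : ℕ} [Fact p.Prime]

theorem isSquare_three_of_mod_twelve_eq_one (hp : p % 12 = 1) : IsSquare (3 : ZMod p) := by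
  have h :=
    (exists_sq_eq_prime_iff_of_mod_four_eq_one (p := p) (q := 3) (by omega) (by norm_num)).mpr
  rw [← natCast_mod, show p % 3 = 1 by omega] at h
  exact_mod_cast h (by simp)

theorem isSquare_two_of_isSquare_six (hp : p % 12 = 1) (h6 : IsSquare (6 : ZMod p)) :
    IsSquare (2 : ZMod p) := by
  have h3 : ((3 : ℕ) : ZMod p) ≠ 0 := by
    rw [Ne, natCast_eq_zero_iff]
    intro h
    have := Nat.le_of_dvd three_pos h
    have := (Fact.out : p.Prime).one_lt
    omega
  push_cast at h3
  have h2 : (2 : ZMod p) = 6 / 3 := by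
    rw [eq_div_iff h3]
    norm_num
  rw [h2]
  exact h6.div (isSquare_three_of_mod_twelve_eq_one hp)

end ZMod

theorem stmt_2_general (n : ℕ) (hmod : n % 6 = 3) (hp : Nat.Prime (4 * n + 1)) :
    ¬ ∃ S : Finset (ZMod (4 * n + 1)),
        IsSplitting (4 * n + 1) ({-1, 1, 2, 3} : Finset ℤ) S ∧ S.card = n := by
  rintro ⟨S, hS, hcard⟩
  have := Fact.mk hp
  have hodd : Odd n := Nat.odd_iff.mpr (by omega)
  have hprod : (-6 : ZMod (4 * n + 1)) ^ n * (∏ s ∈ S, s) ^ 4 = -1 := by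
    rw [← FiniteField.prod_erase_zero_eq_neg_one, ← hS.prod_pow_mul_prod_pow, hcard]
    norm_num
  have h6 : IsSquare (6 : ZMod (4 * n + 1)) :=
    isSquare_of_pow_mul_sq_eq_one hodd (b := (∏ s ∈ S, s) ^ 2)
      (by linear_combination (∏ s ∈ S, s) ^ 4 * hodd.neg_pow (6 : ZMod (4 * n + 1)) - hprod)
  have h2 := ZMod.isSquare_two_of_isSquare_six (by omega) h6
  have := (ZMod.exists_sq_eq_two_iff (by omega)).mp h2
  omega

theorem stmt_2 (n : ℕ) (hn : 1 ≤ n) (hmod : n % 6 = 3) (hp : Nat.Prime (4 * n + 1)) :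
    ¬ ∃ S : Finset (ZMod (4 * n + 1)),
        IsSplitting (4 * n + 1) ({-1, 1, 2, 3} : Finset ℤ) S ∧ S.card = n :=
  stmt_2_general n hmod hp
end

section
/- Let n ≥ 1 be an integer with n ≡ 5, 7, 11, 13, or 19 (mod 20) such that 6n+1 is prime. Then there is no splitting ℤ_{6n+1} = (M,S) with multiplier set M = {-1,1,2,3,4,5} and |S| = n. (Equivalently, the (5,1,n)-quasi-cross does not lattice tile ℝⁿ for such n.) -/
open Finset

theorem Finset.odd_sum_of_odd {ι : Type*} {s : Finset ι} {f : ι → ℤ}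
    (hf : ∀ i ∈ s, Odd (f i)) (hs : Odd #s) : Odd (∑ i ∈ s, f i) := by
  rw [← ZMod.intCast_eq_one_iff_odd, Int.cast_sum,
    sum_congr rfl fun i hi => ZMod.intCast_eq_one_iff_odd.mpr (hf i hi), sum_const,
    nsmul_one, ZMod.natCast_eq_one_iff_odd.mpr hs]

namespace IsSplitting

variable {q : ℕ} {M : Finset ℤ} {S : Finset (ZMod q)}

theorem ne_zero_of_mem (h : IsSplitting q M S) {m : ℤ} (hm : m ∈ M) {s : ZMod q}
    (hs : s ∈ S) : s ≠ 0 := by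
  have : (m : ZMod q) * s ∈ {a : ZMod q | a ≠ 0} :=
    h.2.2 ▸ ⟨(m, s), mem_coe.mpr (mem_product.mpr ⟨hm, hs⟩), rfl⟩
  exact right_ne_zero_of_mul this

theorem sum_product_eq_sum_erase_zero [NeZero q] (h : IsSplitting q M S) {R : Type*}
    [AddCommMonoid R] (f : ZMod q → R) :
    ∑ x ∈ M ×ˢ S, f (x.1 * x.2) = ∑ a ∈ univ.erase 0, f a := by
  classical
  have himage : (M ×ˢ S).image (fun x : ℤ × ZMod q => (x.1 : ZMod q) * x.2) = univ.erase 0 := by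
    apply coe_injective
    rw [coe_image, h.2.2]
    ext a
    simp
  rw [← himage, sum_image fun x hx y hy hxy => h.2.1 hx hy hxy]

theorem sum_mulChar_mul_sum_eq_zero [NeZero q] [Nontrivial (ZMod q)] (h : IsSplitting q M S)
    {R : Type*} [CommRing R] [IsDomain R] {χ : MulChar (ZMod q) R} (hχ : χ ≠ 1) :
    (∑ m ∈ M, χ m) * (∑ s ∈ S, χ s) = 0 := by
  classical
  calc (∑ m ∈ M, χ m) * (∑ s ∈ S, χ s) = ∑ x ∈ M ×ˢ S, χ (x.1 * x.2) := by
        simp only [sum_mul_sum, sum_product, map_mul]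
    _ = ∑ a, χ a := by
        rw [h.sum_product_eq_sum_erase_zero, sum_erase _ (MulChar.map_zero χ)]
    _ = 0 := MulChar.sum_eq_zero_of_ne_one hχ

theorem sum_legendreSym_eq_zero {p : ℕ} [Fact p.Prime] (hp : p ≠ 2) {S : Finset (ZMod p)}
    (h : IsSplitting p M S) (hS : Odd #S) : ∑ m ∈ M, legendreSym p m = 0 := by
  rcases M.eq_empty_or_nonempty with rfl | ⟨m, hm⟩
  · exact sum_empty
  have hχ : quadraticChar (ZMod p) ≠ 1 := quadraticChar_ne_one (by rwa [ZMod.ringChar_zmod_n])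
  refine (mul_eq_zero.mp (h.sum_mulChar_mul_sum_eq_zero hχ)).resolve_right ?_
  have hodd : Odd (∑ s ∈ S, quadraticChar (ZMod p) s) := odd_sum_of_odd (fun s hs => by
    rcases quadraticChar_dichotomy (h.ne_zero_of_mem hm hs) with h1 | h1 <;> rw [h1] <;> decide) hS
  exact fun h0 => Int.not_even_iff_odd.mpr hodd (h0 ▸ Even.zero)

end IsSplitting

namespace legendreSym

variable {p : ℕ} [Fact p.Prime]

theorem at_three_of_mod_twelve (hp : p % 12 = 7) : legendreSym p 3 = -1 := by
  have : Fact (Nat.Prime 3) := ⟨Nat.prime_three⟩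
  have hrec := quadratic_reciprocity_three_mod_four (p := 3) (q := p) rfl (by omega)
  rw [Nat.cast_ofNat, legendreSym.mod 3, Nat.cast_ofNat, show (p : ℤ) % 3 = 1 by omega,
    at_one] at hrec
  exact hrec

theorem at_ten_of_mod_forty (hp : p % 40 ∈ ({1, 3, 9, 13, 27, 31, 37, 39} : Finset ℕ)) :
    legendreSym p 10 = 1 := by
  have : Fact (Nat.Prime 5) := ⟨Nat.prime_five⟩
  have hp2 : p ≠ 2 := by rintro rfl; simp at hp
  have hrec := quadratic_reciprocity_one_mod_four (p := 5) (q := p) rfl hp2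
  rw [Nat.cast_ofNat] at hrec
  rw [show (10 : ℤ) = 2 * 5 from rfl, legendreSym.mul, at_two hp2, hrec, legendreSym.mod 5,
    Nat.cast_ofNat, ZMod.χ₈_nat_mod_eight, ← Nat.mod_mod_of_dvd p (show 8 ∣ 40 by norm_num),
    show (p : ℤ) % 5 = ((p % 40 % 5 : ℕ) : ℤ) by omega]
  generalize p % 40 = r at hp
  simp only [mem_insert, mem_singleton] at hp
  rcases hp with rfl | rfl | rfl | rfl | rfl | rfl | rfl | rfl <;> rfl

theorem sum_quasiCross_multipliers_ne_zero (hp : p % 12 = 7) (h10 : legendreSym p 10 = 1) :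
    ∑ m ∈ ({-1, 1, 2, 3, 4, 5} : Finset ℤ), legendreSym p m ≠ 0 := by
  have hp2 : p ≠ 2 := by omega
  have h2ne : ((2 : ℤ) : ZMod p) ≠ 0 := by
    rw [Ne, ZMod.intCast_zmod_eq_zero_iff_dvd]
    exact fun h => by have := Int.le_of_dvd two_pos h; omega
  have h5 : legendreSym p 5 = legendreSym p 2 := by
    rw [show (10 : ℤ) = 2 * 5 from rfl, legendreSym.mul] at h10
    rcases eq_one_or_neg_one p h2ne with h2 | h2 <;> rw [h2] at h10 ⊢ <;> linarith
  have h4 : legendreSym p 4 = 1 := sq_one' p h2ne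
  have hneg : legendreSym p (-1) = -1 := by
    rw [at_neg_one hp2, ZMod.χ₄_nat_three_mod_four (by omega)]
  rw [sum_insert (by decide), sum_insert (by decide), sum_insert (by decide),
    sum_insert (by decide), sum_insert (by decide), sum_singleton, hneg, at_one, h4,
    at_three_of_mod_twelve hp, h5]
  rcases eq_one_or_neg_one p h2ne with h2 | h2 <;> rw [h2] <;> norm_num

end legendreSym

theorem stmt_3_general (n : ℕ)
    (hmod : n % 20 = 5 ∨ n % 20 = 7 ∨ n % 20 = 11 ∨ n % 20 = 13 ∨ n % 20 = 19)
    (hp : Nat.Prime (6 * n + 1)) :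
    ¬ ∃ S : Finset (ZMod (6 * n + 1)),
        IsSplitting (6 * n + 1) ({-1, 1, 2, 3, 4, 5} : Finset ℤ) S ∧ S.card = n := by
  rintro ⟨S, hS, hcard⟩
  have : Fact (6 * n + 1).Prime := ⟨hp⟩
  have hq5 : (6 * n + 1) % 5 ≠ 0 := fun h => by
    rcases hp.eq_one_or_self_of_dvd 5 (Nat.dvd_of_mod_eq_zero h) with h5 | h5 <;> omega
  have hq12 : (6 * n + 1) % 12 = 7 := by omega
  have hq40 : (6 * n + 1) % 40 ∈ ({1, 3, 9, 13, 27, 31, 37, 39} : Finset ℕ) := by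
    simp only [mem_insert, mem_singleton]
    omega
  have hodd : Odd #S := by rw [hcard, Nat.odd_iff]; omega
  exact legendreSym.sum_quasiCross_multipliers_ne_zero hq12
    (legendreSym.at_ten_of_mod_forty hq40) (hS.sum_legendreSym_eq_zero (by omega) hodd)

theorem stmt_3 (n : ℕ) (hn : 1 ≤ n)
    (hmod : n % 20 = 5 ∨ n % 20 = 7 ∨ n % 20 = 11 ∨ n % 20 = 13 ∨ n % 20 = 19)
    (hp : Nat.Prime (6 * n + 1)) :
    ¬ ∃ S : Finset (ZMod (6 * n + 1)),
        IsSplitting (6 * n + 1) ({-1, 1, 2, 3, 4, 5} : Finset ℤ) S ∧ S.card = n :=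
  stmt_3_general n hmod hp
end

section
/- Let n be an odd positive integer such that 4n+1 is prime and 6ⁿ ≢ 1 (mod 4n+1). Then there is no splitting ℤ_{4n+1} = (M,S) with multiplier set M = {-1,1,2,3} and |S| = n. (Equivalently, the (3,1,n)-quasi-cross does not lattice tile ℝⁿ for such n.) -/
theorem stmt_4 (n : ℕ) (hn : 1 ≤ n) (hodd : Odd n) (hp : Nat.Prime (4 * n + 1))
    (h6 : (6 : ZMod (4 * n + 1)) ^ n ≠ 1) :
    ¬ ∃ S : Finset (ZMod (4 * n + 1)),
        IsSplitting (4 * n + 1) ({-1, 1, 2, 3} : Finset ℤ) S ∧ S.card = n := by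
  rintro ⟨S, ⟨h0, hinj, himg⟩, hcard⟩
  haveI : Fact (Nat.Prime (4 * n + 1)) := ⟨hp⟩
  set M : Finset ℤ := {-1, 1, 2, 3} with hM
  set f : ℤ × ZMod (4 * n + 1) → ZMod (4 * n + 1) := fun p => (p.1 : ZMod (4 * n + 1)) * p.2 with hf
  have himg' : (M ×ˢ S).image f = Finset.univ.erase 0 := by
    apply Finset.coe_injective
    rw [Finset.coe_image, himg]
    ext a
    simp [Finset.mem_erase]
  have hw : ∏ a ∈ Finset.univ.erase (0 : ZMod (4 * n + 1)), a = -1 := by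
    have hu : (Finset.univ : Finset (ZMod (4 * n + 1))ˣ).image (Units.val) =
        Finset.univ.erase (0 : ZMod (4 * n + 1)) := by
      ext a
      simp only [Finset.mem_image, Finset.mem_erase, Finset.mem_univ, and_true]
      constructor
      · rintro ⟨u, -, rfl⟩; exact u.ne_zero
      · intro ha; exact ⟨Units.mk0 a ha, by simp⟩
    rw [← hu, Finset.prod_image (fun x _ y _ h => Units.ext h)]
    rw [← Units.coe_prod, FiniteField.prod_univ_units_id_eq_neg_one, Units.val_neg, Units.val_one]
  have hprod : ∏ p ∈ M ×ˢ S, f p = -1 := by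
    rw [← himg', Finset.prod_image (fun x hx y hy h => hinj (by exact_mod_cast hx) (by exact_mod_cast hy) h)] at hw
    exact hw
  set T : ZMod (4 * n + 1) := ∏ s ∈ S, s with hT
  have hMS : ∏ p ∈ M ×ˢ S, f p = (-6 : ZMod (4 * n + 1)) ^ n * T ^ 4 := by
    rw [Finset.prod_product]
    have hstep : ∀ m : ℤ, ∏ s ∈ S, f (m, s) = (m : ZMod (4 * n + 1)) ^ n * T := by
      intro m
      simp only [hf]
      rw [Finset.prod_mul_distrib, Finset.prod_const, hcard]
    simp only [hstep]
    rw [hM]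
    rw [Finset.prod_insert (by decide), Finset.prod_insert (by decide),
      Finset.prod_insert (by decide), Finset.prod_singleton]
    have h6n : (-6 : ZMod (4 * n + 1)) ^ n
        = (-1 : ZMod (4 * n + 1)) ^ n * 1 ^ n * 2 ^ n * 3 ^ n := by
      rw [← mul_pow, ← mul_pow, ← mul_pow]; norm_num
    rw [h6n]
    push_cast
    ring
  have key : (6 : ZMod (4 * n + 1)) ^ n * T ^ 4 = 1 := by
    have h1 := hMS.symm.trans hprod
    rw [hodd.neg_pow] at h1
    linear_combination -h1
  have hq1 : 4 * n + 1 - 1 = 4 * n := by omega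
  have hT0 : T ≠ 0 := by
    intro h
    rw [h] at key
    simp [zero_pow] at key
  have hTpow : T ^ (4 * n) = 1 := by
    have h := ZMod.pow_card_sub_one_eq_one hT0
    rwa [hq1] at h
  have key2 : (6 : ZMod (4 * n + 1)) ^ (n * n) = 1 := by
    have h2 := congrArg (· ^ n) key
    simp only [mul_pow, one_pow, ← pow_mul] at h2
    linear_combination h2 - (6 : ZMod (4 * n + 1)) ^ (n * n) * hTpow
  have h6ne : (6 : ZMod (4 * n + 1)) ≠ 0 := by
    intro h
    rw [h, zero_pow (by positivity)] at key2
    exact zero_ne_one key2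
  have h64n : (6 : ZMod (4 * n + 1)) ^ (4 * n) = 1 := by
    have h := ZMod.pow_card_sub_one_eq_one h6ne
    rwa [hq1] at h
  have hd1 : orderOf (6 : ZMod (4 * n + 1)) ∣ n * n := orderOf_dvd_of_pow_eq_one key2
  have hd2 : orderOf (6 : ZMod (4 * n + 1)) ∣ 4 * n := orderOf_dvd_of_pow_eq_one h64n
  have hgcd : Nat.gcd (n * n) (4 * n) = n := by
    rw [Nat.gcd_mul_right]
    have hc : Nat.Coprime n 4 := (hodd.coprime_two_right).pow_right 2
    rw [Nat.Coprime] at hc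
    rw [hc, one_mul]
  have hdn : orderOf (6 : ZMod (4 * n + 1)) ∣ n := by
    have := Nat.dvd_gcd hd1 hd2
    rwa [hgcd] at this
  exact h6 (orderOf_dvd_iff_pow_eq_one.mp hdn)
end

section
/- Let k ≥ 1 and n ≥ 1 be integers with n ≡ 3 or 7 (mod 8). Then there is no splitting ℤ_{(4k+3)n+1} = (M,S) with multiplier set M = [-1,4k+2]* = {-1} ∪ {1,2,…,4k+2} and |S| = n. (Equivalently, the (4k+2,1,n)-quasi-cross does not lattice tile ℝⁿ for such k and n.) -/
/-- Parity obstruction: if `q ≡ 2 (mod 4)` and the number of odd multipliers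
is even, there is no splitting. -/
lemma no_splitting_aux (q : ℕ) (hq4 : q % 4 = 2) (M : Finset ℤ) (S : Finset (ZMod q))
    (hsp : IsSplitting q M S)
    (hMo : (M.filter (fun m => m % 2 = 1)).card % 2 = 0) : False := by
  obtain ⟨h0, hinj, himg⟩ := hsp
  haveI : NeZero q := ⟨by omega⟩
  have hq2 : (2 : ℕ) ∣ q := by omega
  set f : ℤ × ZMod q → ZMod q := fun p => (p.1 : ZMod q) * p.2 with hf
  let φ : ZMod q →+* ZMod 2 := ZMod.castHom hq2 (ZMod 2)
  set A : Finset (ZMod q) := Finset.univ.filter (fun a => φ a = 1) with hA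
  set A0 : Finset (ZMod q) := Finset.univ.filter (fun a => φ a = 0) with hA0
  have hxy : ∀ x : ZMod 2, ¬ x = 1 ↔ x = 0 := by decide
  have hsum : A.card + A0.card = q := by
    have h1 := Finset.card_filter_add_card_filter_not
      (s := (Finset.univ : Finset (ZMod q))) (p := fun a => φ a = 1)
    rw [Finset.card_univ, ZMod.card] at h1
    have h2 : A0 = Finset.univ.filter (fun a => ¬ φ a = 1) := by
      apply Finset.filter_congr; intro a _; simp [hxy]
    rw [h2]
    exact h1
  have hbij : A0.card = A.card := by
    apply Finset.card_bij (fun a _ => a + 1)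
    · intro a ha
      simp only [hA0, Finset.mem_filter] at ha
      simp only [hA, Finset.mem_filter, Finset.mem_univ, true_and, map_add, ha.2,
        map_one, zero_add]
    · intro a _ b _ h
      exact add_right_cancel h
    · intro b hb
      simp only [hA, Finset.mem_filter] at hb
      refine ⟨b - 1, ?_, by ring⟩
      simp only [hA0, Finset.mem_filter, Finset.mem_univ, true_and, map_sub, hb.2,
        map_one, sub_self]
  have hAcard : 2 * A.card = q := by omega
  set T : Finset (ℤ × ZMod q) := (M ×ˢ S).filter (fun p => φ (f p) = 1) with hT
  have hTA : T.card = A.card := by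
    have hsub : (T : Set (ℤ × ZMod q)) ⊆ ↑(M ×ˢ S) :=
      Finset.coe_subset.mpr (Finset.filter_subset _ _)
    have himage : T.image f = A := by
      ext a
      simp only [Finset.mem_image, hA, Finset.mem_filter, Finset.mem_univ, true_and]
      constructor
      · rintro ⟨p, hp, rfl⟩
        simp only [hT, Finset.mem_filter] at hp
        exact hp.2
      · intro ha
        have hane : a ≠ 0 := by
          intro h; rw [h, map_zero] at ha; exact zero_ne_one ha
        have hmem : a ∈ f '' ↑(M ×ˢ S) := by rw [himg]; exact hane
        obtain ⟨p, hp, hpa⟩ := hmem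
        refine ⟨p, ?_, hpa⟩
        simp only [hT, Finset.mem_filter]
        exact ⟨Finset.mem_coe.mp hp, by rw [hpa]; exact ha⟩
    rw [← himage]
    exact (Finset.card_image_of_injOn (hinj.mono hsub)).symm
  set Mo : Finset ℤ := M.filter (fun m => m % 2 = 1) with hMo'
  set So : Finset (ZMod q) := S.filter (fun s => φ s = 1) with hSo
  have hmul1 : ∀ x y : ZMod 2, x * y = 1 ↔ x = 1 ∧ y = 1 := by decide
  have hcast : ∀ m : ℤ, ((m : ZMod 2) = 1) ↔ m % 2 = 1 := by
    intro m
    rw [show (1 : ZMod 2) = ((1 : ℤ) : ZMod 2) by norm_cast, ZMod.intCast_eq_intCast_iff]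
    unfold Int.ModEq
    omega
  have hTprod : T = Mo ×ˢ So := by
    rw [hT, hMo', hSo, ← Finset.filter_product]
    apply Finset.filter_congr
    intro p _
    have h3 : φ (f p) = (p.1 : ZMod 2) * φ p.2 := by
      simp only [hf, map_mul]
      congr 1
      exact map_intCast φ p.1
    rw [h3]
    simp [hmul1, hcast]
  have hTcard : T.card = Mo.card * So.card := by
    rw [hTprod, Finset.card_product]
  obtain ⟨c, hc⟩ : ∃ c, Mo.card = 2 * c := ⟨Mo.card / 2, by omega⟩
  have hTeven : T.card = 2 * (c * So.card) := by rw [hTcard, hc]; ring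
  omega

theorem stmt_8 (k n : ℕ) (hk : 1 ≤ k) (hn : 1 ≤ n)
    (hmod : n % 8 = 3 ∨ n % 8 = 7) :
    ¬ ∃ S : Finset (ZMod ((4 * k + 3) * n + 1)),
        IsSplitting ((4 * k + 3) * n + 1)
          ((Finset.Icc (-1 : ℤ) (4 * (k : ℤ) + 2)).erase 0) S ∧ S.card = n := by
  rintro ⟨S, hsp, hcard⟩
  obtain ⟨t, ht⟩ : ∃ t, n = 4 * t + 3 := ⟨n / 4, by omega⟩
  have hqval : (4 * k + 3) * n + 1 = 4 * (4 * k * t + 3 * k + 3 * t + 2) + 2 := by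
    rw [ht]; ring
  have hq4 : ((4 * k + 3) * n + 1) % 4 = 2 := by omega
  apply no_splitting_aux _ hq4 _ _ hsp
  -- count odd multipliers: -1, 1, 3, ..., 4k+1, i.e. 2k+2 of them
  have himg : ((Finset.Icc (-1 : ℤ) (4 * (k : ℤ) + 2)).erase 0).filter (fun m => m % 2 = 1)
      = Finset.image (fun i : ℕ => 2 * (i : ℤ) - 1) (Finset.range (2 * k + 2)) := by
    ext m
    simp only [Finset.mem_filter, Finset.mem_erase, Finset.mem_Icc,
      Finset.mem_image, Finset.mem_range]
    constructor
    · rintro ⟨⟨hne, h1, h2⟩, hodd⟩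
      refine ⟨((m + 1) / 2).toNat, ?_, ?_⟩ <;> omega
    · rintro ⟨i, hi, rfl⟩
      refine ⟨⟨?_, ?_, ?_⟩, ?_⟩ <;> omega
  rw [himg, Finset.card_image_of_injective _ (fun a b h => by omega), Finset.card_range]
  omega
end

section
/- Let q be a prime and let ℤ_q = (M,S) be a splitting with n := |S| < q−1. Then there exists an integer i with 1 ≤ i ≤ n such that Σ_{m∈M} mⁱ ≡ 0 (mod q). -/
theorem stmt_9 (q : ℕ) (hq : Nat.Prime q) (M : Finset ℤ) (S : Finset (ZMod q))
    (hsplit : IsSplitting q M S) (hcard : S.card < q - 1) :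
    ∃ i : ℕ, 1 ≤ i ∧ i ≤ S.card ∧ (q : ℤ) ∣ ∑ m ∈ M, m ^ i := by
  haveI := Fact.mk hq
  obtain ⟨hM0, hinj, himg⟩ := hsplit
  set f : ℤ × ZMod q → ZMod q := fun p => (p.1 : ZMod q) * p.2 with hf
  have himgF : (M ×ˢ S).image f = Finset.univ \ {0} := by
    apply Finset.coe_injective
    rw [Finset.coe_image, himg]
    ext x
    simp
  have hone : (1 : ZMod q) ∈ (M ×ˢ S).image f := by
    rw [himgF]; simp
  obtain ⟨p0, hp0, hp0v⟩ := Finset.mem_image.mp hone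
  obtain ⟨hm0, hs0⟩ := Finset.mem_product.mp hp0
  have hS0 : (0 : ZMod q) ∉ S := by
    intro h0
    have hmem : f (p0.1, 0) ∈ (M ×ˢ S).image f :=
      Finset.mem_image_of_mem _ (Finset.mem_product.mpr ⟨hm0, h0⟩)
    rw [himgF] at hmem
    simp [hf] at hmem
  -- the key product identity
  have key : ∀ i : ℕ, 1 ≤ i → i ≤ S.card →
      (∑ m ∈ M, (m : ZMod q) ^ i) * (∑ s ∈ S, s ^ i) = 0 := by
    intro i hi1 hin
    have hlt : i < Fintype.card (ZMod q) - 1 := by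
      rw [ZMod.card]
      omega
    have hall : ∑ x : ZMod q, x ^ i = 0 :=
      FiniteField.sum_pow_lt_card_sub_one (K := ZMod q) i hlt
    have hsplitsum : ∑ x : ZMod q, x ^ i
        = ∑ x ∈ Finset.univ \ {(0 : ZMod q)}, x ^ i + (0 : ZMod q) ^ i := by
      rw [Finset.sum_eq_sum_sdiff_singleton_add (Finset.mem_univ (0 : ZMod q))]
    have hzero : ((0 : ZMod q)) ^ i = 0 := zero_pow (by omega)
    have hnz : ∑ x ∈ Finset.univ \ {(0 : ZMod q)}, x ^ i = 0 := by
      rw [hsplitsum, hzero, add_zero] at hall; exact hall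
    calc (∑ m ∈ M, (m : ZMod q) ^ i) * (∑ s ∈ S, s ^ i)
        = ∑ m ∈ M, ∑ s ∈ S, ((m : ZMod q) * s) ^ i := by
          rw [Finset.sum_mul_sum]
          simp [mul_pow]
      _ = ∑ p ∈ M ×ˢ S, (f p) ^ i := by
          rw [Finset.sum_product]
      _ = ∑ x ∈ (M ×ˢ S).image f, x ^ i := by
          rw [Finset.sum_image (fun x hx y hy h => hinj hx hy h)]
      _ = 0 := by rw [himgF, hnz]
  by_contra hcon
  push_neg at hcon
  -- so the S power sums vanish
  have hSsum : ∀ i : ℕ, 1 ≤ i → i ≤ S.card → ∑ s ∈ S, s ^ i = 0 := by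
    intro i hi1 hin
    have hM : (∑ m ∈ M, (m : ZMod q) ^ i) ≠ 0 := by
      intro h
      apply hcon i hi1 hin
      rw [← ZMod.intCast_zmod_eq_zero_iff_dvd]
      push_cast
      exact h
    rcases mul_eq_zero.mp (key i hi1 hin) with h | h
    · exact absurd h hM
    · exact h
  -- Lagrange interpolation contradiction
  set s0 : ZMod q := p0.2 with hs0def
  have hs0S : s0 ∈ S := hs0
  have hs0ne : s0 ≠ 0 := fun h => hS0 (h ▸ hs0S)
  have hIdInj : Set.InjOn (id : ZMod q → ZMod q) ↑S := Function.injective_id.injOn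
  set g : Polynomial (ZMod q) := Lagrange.basis S id s0 with hg
  have hdeg : g.natDegree < S.card := by
    rw [hg, Lagrange.natDegree_basis hIdInj hs0S]
    have : 0 < S.card := Finset.card_pos.mpr ⟨s0, hs0S⟩
    omega
  have hA1 : ∑ s ∈ S, s * g.eval s = s0 := by
    rw [Finset.sum_eq_single s0]
    · rw [hg]
      have := Lagrange.eval_basis_self hIdInj hs0S
      simp only [id] at this
      rw [this, mul_one]
    · intro b hb hne
      rw [hg]
      have := Lagrange.eval_basis_of_ne (v := id) (Ne.symm hne) hb
      simp only [id] at this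
      rw [this, mul_zero]
    · intro h; exact absurd hs0S h
  have hA0 : ∑ s ∈ S, s * g.eval s = 0 := by
    have heval : ∀ s : ZMod q, g.eval s
        = ∑ j ∈ Finset.range S.card, g.coeff j * s ^ j := fun s =>
      Polynomial.eval_eq_sum_range' hdeg s
    calc ∑ s ∈ S, s * g.eval s
        = ∑ s ∈ S, ∑ j ∈ Finset.range S.card, g.coeff j * s ^ (j + 1) := by
          refine Finset.sum_congr rfl fun s _ => ?_
          rw [heval s, Finset.mul_sum]
          refine Finset.sum_congr rfl fun j _ => ?_
          ring
      _ = ∑ j ∈ Finset.range S.card, g.coeff j * ∑ s ∈ S, s ^ (j + 1) := by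
          rw [Finset.sum_comm]
          refine Finset.sum_congr rfl fun j _ => ?_
          rw [Finset.mul_sum]
      _ = 0 := by
          refine Finset.sum_eq_zero fun j hj => ?_
          rw [hSsum (j + 1) (by omega) (by
            have := Finset.mem_range.mp hj; omega), mul_zero]
  exact hs0ne (by rw [← hA1, hA0])
end

section
/- Let 1 ≤ k₋ < k₊ and n ≥ 1 be integers and set q = (k₊+k₋)n+1. Suppose an integer d divides q, no prime p ≤ k₊ divides d (i.e., gcd(d, k₊#) = 1 where k₊# is the primorial of k₊), and n < d < q. Then there is no splitting ℤ_q = (M,S) with multiplier set M = [-k₋,k₊]* = {m ∈ ℤ : -k₋ ≤ m ≤ k₊, m ≠ 0} and |S| = n. (Equivalently, the (k₊,k₋,n)-quasi-cross does not lattice tile ℝⁿ.) -/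
open Finset

lemma ZMod.isUnit_intCast_of_forall_prime_le {d k : ℕ}
    (hd : ∀ p : ℕ, p.Prime → p ≤ k → ¬ p ∣ d) {m : ℤ} (hm0 : m ≠ 0) (hmk : m.natAbs ≤ k) :
    IsUnit (m : ZMod d) := by
  rw [ZMod.coe_int_isUnit_iff_isCoprime, Int.isCoprime_iff_nat_coprime, Int.natAbs_natCast]
  exact Nat.coprime_of_dvd fun p hp hpd hpm =>
    hd p hp ((Nat.le_of_dvd (Int.natAbs_pos.mpr hm0) hpm).trans hmk) hpd

lemma ZMod.card_filter_castHom_eq_zero {q d : ℕ} [NeZero q] (hdvd : d ∣ q) :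
    #{x : ZMod q | ZMod.castHom hdvd (ZMod d) x = 0} = q / d := by
  set f := (ZMod.castHom hdvd (ZMod d)).toAddMonoidHom
  have hrange : f.range = ⊤ := AddMonoidHom.range_eq_top.mpr (ZMod.castHom_surjective hdvd)
  have hker := f.ker.card_mul_index
  rw [AddSubgroup.index_ker, hrange, AddSubgroup.card_top, Nat.card_zmod, Nat.card_zmod] at hker
  have hd : 0 < d := Nat.pos_of_ne_zero (by rintro rfl; exact NeZero.ne q (zero_dvd_iff.mp hdvd))
  rw [Nat.div_eq_of_eq_mul_left hd hker.symm, Nat.card_eq_fintype_card, ← Fintype.card_subtype]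
  exact Fintype.card_congr (Equiv.refl _)

theorem IsSplitting.card_mul_card_filter_castHom_add_one {q d : ℕ} [NeZero q] (hdvd : d ∣ q)
    {M : Finset ℤ} {S : Finset (ZMod q)} (h : IsSplitting q M S)
    (hM : ∀ m ∈ M, IsUnit (m : ZMod d)) :
    #M * #{s ∈ S | ZMod.castHom hdvd (ZMod d) s = 0} + 1 = q / d := by
  obtain ⟨-, hinj, hcover⟩ := h
  set φ := ZMod.castHom hdvd (ZMod d)
  set μ := fun p : ℤ × ZMod q => (p.1 : ZMod q) * p.2
  have hφμ {m : ℤ} (hm : m ∈ M) (s : ZMod q) : φ (μ (m, s)) = 0 ↔ φ s = 0 := by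
    rw [map_mul, map_intCast]
    exact (hM m hm).mul_right_eq_zero
  have himage :
      (M ×ˢ {s ∈ S | φ s = 0}).image μ = ({x : ZMod q | φ x = 0} : Finset _).erase 0 := by
    ext x
    simp only [mem_image, mem_product, mem_filter, mem_erase, mem_univ, true_and]
    constructor
    · rintro ⟨⟨m, s⟩, ⟨hm, hs, hφs⟩, rfl⟩
      have hmem : μ (m, s) ∈ μ '' ↑(M ×ˢ S) := ⟨(m, s), by simp [hm, hs], rfl⟩
      rw [hcover] at hmem
      exact ⟨hmem, (hφμ hm s).mpr hφs⟩
    · rintro ⟨hx0, hxφ⟩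
      obtain ⟨⟨m, s⟩, hms, rfl⟩ : x ∈ μ '' ↑(M ×ˢ S) := hcover ▸ hx0
      rw [coe_product, Set.mem_prod] at hms
      exact ⟨(m, s), ⟨hms.1, hms.2, (hφμ hms.1 s).mp hxφ⟩, rfl⟩
  have hinj₀ : Set.InjOn μ ↑(M ×ˢ {s ∈ S | φ s = 0}) :=
    hinj.mono (coe_subset.mpr (product_subset_product_right (filter_subset _ _)))
  calc #M * #{s ∈ S | φ s = 0} + 1 = #((M ×ˢ {s ∈ S | φ s = 0}).image μ) + 1 := by
        rw [card_image_of_injOn hinj₀, card_product]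
    _ = #{x : ZMod q | φ x = 0} := by rw [himage, card_erase_add_one (by simp)]
    _ = q / d := ZMod.card_filter_castHom_eq_zero hdvd

theorem stmt_10_general (kp km n : ℕ) (hk : km < kp)
    (d : ℕ) (hdvd : d ∣ (kp + km) * n + 1)
    (hcop : ∀ p : ℕ, Nat.Prime p → p ≤ kp → ¬ p ∣ d)
    (hlow : n < d) (hhigh : d < (kp + km) * n + 1) :
    ¬ ∃ S : Finset (ZMod ((kp + km) * n + 1)),
        IsSplitting ((kp + km) * n + 1)
          ((Finset.Icc (-(km : ℤ)) (kp : ℤ)).erase 0) S ∧ S.card = n := by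
  rintro ⟨S, hsplit, -⟩
  have hM : ∀ m ∈ (Icc (-(km : ℤ)) kp).erase 0, IsUnit (m : ZMod d) := fun m hm => by
    obtain ⟨hm0, hmI⟩ := mem_erase.mp hm
    rw [mem_Icc] at hmI
    exact ZMod.isUnit_intCast_of_forall_prime_le hcop hm0 (by omega)
  have hMcard : #((Icc (-(km : ℤ)) kp).erase 0) = kp + km := by
    rw [card_erase_of_mem (by simp), Int.card_Icc]
    omega
  have hcard := hsplit.card_mul_card_filter_castHom_add_one hdvd hM
  rw [hMcard] at hcard
  set t := #{s ∈ S | ZMod.castHom hdvd (ZMod d) s = 0}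
  have hq : d * ((kp + km) * t + 1) = (kp + km) * n + 1 := by
    rw [hcard]; exact Nat.mul_div_cancel' hdvd
  rcases Nat.eq_zero_or_pos t with ht | ht
  · rw [ht] at hq; omega
  · have hdt : d * t ≤ n := by nlinarith
    nlinarith

theorem stmt_10 (kp km n : ℕ) (hkm : 1 ≤ km) (hk : km < kp) (hn : 1 ≤ n)
    (d : ℕ) (hdvd : d ∣ (kp + km) * n + 1)
    (hcop : ∀ p : ℕ, Nat.Prime p → p ≤ kp → ¬ p ∣ d)
    (hlow : n < d) (hhigh : d < (kp + km) * n + 1) :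
    ¬ ∃ S : Finset (ZMod ((kp + km) * n + 1)),
        IsSplitting ((kp + km) * n + 1)
          ((Finset.Icc (-(km : ℤ)) (kp : ℤ)).erase 0) S ∧ S.card = n :=
  stmt_10_general kp km n hk d hdvd hcop hlow hhigh
end

section
/- Let 1 ≤ k₋ < k₊ and n ≥ 1 be integers, let P = k₊# be the product of all primes p ≤ k₊, and let r be an integer with 1 < r < k₊+k₋. If there exists an integer u with gcd(u,P) = 1 such that (k₊+k₋)n+1 ≡ r·u (mod r·P), then there is no splitting ℤ_{(k₊+k₋)n+1} = (M,S) with multiplier set M = [-k₋,k₊]* = {m ∈ ℤ : -k₋ ≤ m ≤ k₊, m ≠ 0} and |S| = n. (Equivalently, the (k₊,k₋,n)-quasi-cross does not lattice tile ℝⁿ.) -/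
open Finset

namespace ZMod

def mulNatHom (d N : ℕ) : ZMod d →+ ZMod (d * N) :=
  lift d ⟨(AddMonoidHom.mulLeft (N : ZMod (d * N))).comp (Int.castAddHom _), by
    simp [← Nat.cast_mul, mul_comm]⟩

variable {d N : ℕ}

theorem mulNatHom_intCast (x : ℤ) : mulNatHom d N x = N * x := lift_coe _ _ _

theorem mulNatHom_intCast_mul (m : ℤ) (x : ZMod d) :
    mulNatHom d N (m * x) = m * mulNatHom d N x := by
  rw [← zsmul_eq_mul, map_zsmul, zsmul_eq_mul]

theorem mulNatHom_injective (hN : N ≠ 0) : Function.Injective (mulNatHom d N) := by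
  refine (lift_injective _).mpr fun x hx => ?_
  change (N : ZMod (d * N)) * x = 0 at hx
  rw [← Int.cast_natCast, ← Int.cast_mul, intCast_zmod_eq_zero_iff_dvd, Nat.cast_mul, mul_comm,
    mul_dvd_mul_iff_left (by exact_mod_cast hN)] at hx
  exact (intCast_zmod_eq_zero_iff_dvd _ _).mpr hx

theorem mem_range_mulNatHom_iff {y : ZMod (d * N)} :
    y ∈ (mulNatHom d N).range ↔ castHom (dvd_mul_left N d) (ZMod N) y = 0 := by
  constructor
  · rintro ⟨x, rfl⟩
    obtain ⟨x, rfl⟩ := intCast_surjective x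
    simp [mulNatHom_intCast]
  · intro hy
    rw [← intCast_zmod_cast y, map_intCast, intCast_zmod_eq_zero_iff_dvd] at hy
    obtain ⟨x, hx⟩ := hy
    exact ⟨x, by rw [mulNatHom_intCast, ← intCast_zmod_cast y, hx]; push_cast; rfl⟩

end ZMod

namespace IsSplitting

variable {q : ℕ} {M : Finset ℤ} {S : Finset (ZMod q)}

theorem card_eq [NeZero q] (h : IsSplitting q M S) : q - 1 = #M * #S := by
  obtain ⟨-, hinj, himg⟩ := h
  have himage : (M ×ˢ S).image (fun p : ℤ × ZMod q => (p.1 : ZMod q) * p.2) = univ.erase 0 := by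
    apply coe_injective
    rw [coe_image, himg, coe_erase]
    ext a
    simp
  rw [← card_product, ← card_image_of_injOn hinj, himage, card_erase_of_mem (mem_univ _),
    card_univ, ZMod.card]

theorem mem_image_iff {a : ZMod q} :
    a ∈ (fun p : ℤ × ZMod q => (p.1 : ZMod q) * p.2) '' ↑(M ×ˢ S) ↔
      ∃ m ∈ M, ∃ s ∈ S, (m : ZMod q) * s = a := by
  simp [and_assoc]

theorem descend {d N : ℕ} (h : IsSplitting q M S) (hq : q = d * N) (hN : N ≠ 0)
    (hM : ∀ m ∈ M, IsCoprime m (N : ℤ)) : ∃ S' : Finset (ZMod d), IsSplitting d M S' := by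
  subst hq
  obtain ⟨h0, hinj, himg⟩ := h
  set e := ZMod.mulNatHom d N
  have he : Function.Injective e := ZMod.mulNatHom_injective hN
  have he_mul (m : ℤ) (x : ZMod d) : e (m * x) = m * e x := ZMod.mulNatHom_intCast_mul m x
  refine ⟨S.preimage e he.injOn, h0, ?_, ?_⟩
  · rintro ⟨m₁, x₁⟩ hx₁ ⟨m₂, x₂⟩ hx₂ hx
    simp only [coe_product, Set.mem_prod, mem_coe, mem_preimage] at hx₁ hx₂
    have := @hinj (m₁, e x₁) (by simpa using hx₁) (m₂, e x₂) (by simpa using hx₂)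
      (by simp only [← he_mul]; exact congrArg e hx)
    simp only [Prod.mk.injEq, he.eq_iff] at this
    exact Prod.ext this.1 this.2
  · ext a
    simp only [mem_image_iff, mem_preimage, Set.mem_ofPred_eq]
    constructor
    · rintro ⟨m, hm, x, hx, rfl⟩ ha
      have : (m : ZMod (d * N)) * e x ∈ {a : ZMod (d * N) | a ≠ 0} :=
        himg ▸ mem_image_iff.mpr ⟨m, hm, e x, hx, rfl⟩
      exact this (by rw [← he_mul, ha, map_zero])
    · intro ha
      have : e a ∈ {a : ZMod (d * N) | a ≠ 0} := by
        simpa using (map_ne_zero_iff e he).mpr ha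
      obtain ⟨m, hm, s, hs, hms⟩ := mem_image_iff.mp (himg ▸ this)
      obtain ⟨x, rfl⟩ : s ∈ e.range := by
        have hunit : IsUnit (m : ZMod N) := (ZMod.unitOfIsCoprime m (hM m hm)).isUnit
        have := ZMod.mem_range_mulNatHom_iff.mp ⟨a, hms.symm⟩
        rw [map_mul, map_intCast, hunit.mul_right_eq_zero] at this
        exact ZMod.mem_range_mulNatHom_iff.mpr this
      exact ⟨m, hm, x, hs, he (by rw [he_mul, hms])⟩

theorem card_lt [NeZero q] (h : IsSplitting q M S) (hq : 1 < q) : #M < q := by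
  have hcard := h.card_eq
  rcases Nat.eq_zero_or_pos #S with hS | hS
  · rw [hS] at hcard
    omega
  · have := Nat.le_mul_of_pos_right #M hS
    omega

end IsSplitting

theorem Int.isCoprime_of_natAbs_le_of_isCoprime_primorial {m w : ℤ} {k : ℕ} (hm : m ≠ 0)
    (hmk : m.natAbs ≤ k) (hw : IsCoprime w (primorial k)) : IsCoprime m w := by
  refine isCoprime_of_prime_dvd (fun h => hm h.1) fun z hz hzm hzw =>
    hz.not_isUnit (hw.isUnit_of_dvd' hzw ?_)
  have hz_le : z.natAbs ≤ k :=
    (Nat.le_of_dvd (Int.natAbs_pos.mpr hm) (Int.natAbs_dvd_natAbs.mpr hzm)).trans hmk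
  rw [← Int.natAbs_dvd_natAbs, Int.natAbs_natCast]
  exact (Int.prime_iff_natAbs_prime.mp hz).dvd_primorial_iff.mpr hz_le

theorem Int.exists_eq_mul_isCoprime_of_modEq {a r u P : ℤ} (hu : IsCoprime u P)
    (h : a ≡ r * u [ZMOD r * P]) : ∃ w, a = r * w ∧ IsCoprime w P := by
  obtain ⟨t, ht⟩ := h.dvd
  exact ⟨u - P * t, by linear_combination -ht, IsCoprime.sub_mul_left_left_iff.mpr hu⟩

theorem Int.card_Icc_neg_erase_zero (a b : ℕ) : #((Icc (-(a : ℤ)) b).erase 0) = b + a := by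
  rw [card_erase_of_mem (by simp), Int.card_Icc]
  omega

theorem stmt_11_general (kp km n : ℕ) (hk : km < kp)
    (r : ℤ) (hr1 : 1 < r) (hr2 : r < (kp : ℤ) + km)
    (u : ℤ) (hu : Int.gcd u (primorial kp) = 1)
    (hcong : (((kp + km) * n + 1 : ℕ) : ℤ) ≡ r * u [ZMOD r * (primorial kp : ℤ)]) :
    ¬ ∃ S : Finset (ZMod ((kp + km) * n + 1)),
        IsSplitting ((kp + km) * n + 1)
          ((Finset.Icc (-(km : ℤ)) (kp : ℤ)).erase 0) S ∧ S.card = n := by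
  rintro ⟨S, hS, -⟩
  obtain ⟨w, hq, hw⟩ :=
    Int.exists_eq_mul_isCoprime_of_modEq (Int.isCoprime_iff_gcd_eq_one.mpr hu) hcong
  have hw_pos : 0 < w := pos_of_mul_pos_right (by rw [← hq]; positivity) (by omega)
  lift r to ℕ using by omega
  lift w to ℕ using hw_pos.le
  have hM : ∀ m ∈ (Icc (-(km : ℤ)) kp).erase 0, IsCoprime m w := by
    intro m hm
    rw [mem_erase, mem_Icc] at hm
    exact Int.isCoprime_of_natAbs_le_of_isCoprime_primorial hm.1 (by omega) hw
  obtain ⟨S', hS'⟩ := hS.descend (by exact_mod_cast hq) (by omega) hM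
  have : NeZero r := ⟨by omega⟩
  have := hS'.card_lt (by omega)
  rw [Int.card_Icc_neg_erase_zero] at this
  omega

theorem stmt_11 (kp km n : ℕ) (hkm : 1 ≤ km) (hk : km < kp) (hn : 1 ≤ n)
    (r : ℤ) (hr1 : 1 < r) (hr2 : r < (kp : ℤ) + km)
    (u : ℤ) (hu : Int.gcd u (primorial kp) = 1)
    (hcong : (((kp + km) * n + 1 : ℕ) : ℤ) ≡ r * u [ZMOD r * (primorial kp : ℤ)]) :
    ¬ ∃ S : Finset (ZMod ((kp + km) * n + 1)),
        IsSplitting ((kp + km) * n + 1)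
          ((Finset.Icc (-(km : ℤ)) (kp : ℤ)).erase 0) S ∧ S.card = n :=
  stmt_11_general kp km n hk r hr1 hr2 u hu hcong
end

section
/- Let 1 ≤ k₋ < k₊ be integers and suppose ℤ_q = (M,S) is a splitting with multiplier set M = [-k₋,k₊]* = {m ∈ ℤ : -k₋ ≤ m ≤ k₊, m ≠ 0}. Let d be a positive integer dividing q such that no prime p ≤ k₊ divides d (i.e., gcd(d, k₊#) = 1). Then (k₊+k₋)·d divides q−d, and there exists a splitting ℤ_{q/d} = (M,S') with the same multiplier set M and |S'| = (q−d)/((k₊+k₋)·d). -/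
theorem stmt_13 (kp km : ℕ) (hkm : 1 ≤ km) (hk : km < kp)
    (q : ℕ) (hq : 0 < q) (S : Finset (ZMod q))
    (hsplit : IsSplitting q ((Finset.Icc (-(km : ℤ)) (kp : ℤ)).erase 0) S)
    (d : ℕ) (hd : 0 < d) (hdvd : d ∣ q)
    (hcop : ∀ p : ℕ, Nat.Prime p → p ≤ kp → ¬ p ∣ d) :
    (kp + km) * d ∣ q - d ∧
    ∃ S' : Finset (ZMod (q / d)),
      IsSplitting (q / d) ((Finset.Icc (-(km : ℤ)) (kp : ℤ)).erase 0) S' ∧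
      S'.card = (q - d) / ((kp + km) * d) := by
  classical
  set M : Finset ℤ := (Finset.Icc (-(km : ℤ)) (kp : ℤ)).erase 0 with hM
  set n := q / d with hn
  have hqdn : d * n = q := Nat.mul_div_cancel' hdvd
  have hn0 : 0 < n := Nat.div_pos (Nat.le_of_dvd hq hdvd) hd
  haveI : NeZero n := ⟨hn0.ne'⟩
  haveI : NeZero q := ⟨hq.ne'⟩
  haveI : NeZero d := ⟨hd.ne'⟩
  -- the embedding φ : ZMod n →+ ZMod q, x ↦ d * x
  have hfn : ((Int.castAddHom (ZMod q)).comp (AddMonoidHom.mulLeft (d : ℤ))) (n : ℤ) = 0 := by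
    have : ((d : ℤ) * n : ℤ) = (q : ℤ) := by exact_mod_cast congrArg (fun x : ℕ => (x : ℤ)) hqdn
    simp [this]
  set φ : ZMod n →+ ZMod q := ZMod.lift n ⟨_, hfn⟩ with hφdef
  have hφ : ∀ x : ℤ, φ (x : ZMod n) = ((d * x : ℤ) : ZMod q) := by
    intro x
    simp [hφdef, ZMod.lift_coe]
  have hφinj : Function.Injective φ := by
    rw [injective_iff_map_eq_zero]
    intro a ha
    have hav : ((a.val : ℤ) : ZMod n) = a := by
      have := ZMod.natCast_rightInverse (n := n) a
      exact_mod_cast this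
    rw [← hav, hφ] at ha
    rw [ZMod.intCast_zmod_eq_zero_iff_dvd] at ha
    have hq' : (q : ℤ) = (d : ℤ) * n := by exact_mod_cast hqdn.symm
    rw [hq'] at ha
    have hnd : (n : ℤ) ∣ (a.val : ℤ) := by
      rcases ha with ⟨c, hc⟩
      refine ⟨c, ?_⟩
      have hd0 : (d : ℤ) ≠ 0 := by exact_mod_cast hd.ne'
      have := hc
      rw [mul_assoc] at this
      exact mul_left_cancel₀ hd0 this
    have : (n : ℕ) ∣ a.val := by exact_mod_cast hnd
    have hlt := ZMod.val_lt a
    have hv0 : a.val = 0 := Nat.eq_zero_of_dvd_of_lt this hlt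
    rw [← hav, hv0]
    simp
  -- range of φ = kernel of cast to ZMod d
  have hrange : ∀ x : ZMod q, x ∈ Set.range φ ↔ (ZMod.castHom hdvd (ZMod d)) x = 0 := by
    intro x
    constructor
    · rintro ⟨y, rfl⟩
      have hyv : ((y.val : ℤ) : ZMod n) = y := by
        have := ZMod.natCast_rightInverse (n := n) y
        exact_mod_cast this
      rw [← hyv, hφ, map_intCast]
      rw [ZMod.intCast_zmod_eq_zero_iff_dvd]
      exact ⟨(y.val : ℤ), rfl⟩
    · intro hx
      have hxv : (ZMod.castHom hdvd (ZMod d)) x = ((x.val : ℕ) : ZMod d) := by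
        rw [ZMod.castHom_apply, ← ZMod.natCast_val]
      rw [hxv, ZMod.natCast_eq_zero_iff] at hx
      obtain ⟨y, hy⟩ := hx
      refine ⟨((y : ℤ) : ZMod n), ?_⟩
      rw [hφ]
      have : ((d * y : ℕ) : ZMod q) = x := by
        rw [← hy, ZMod.natCast_val, ZMod.cast_id]
      exact_mod_cast this
  -- m ∈ M is a unit mod d
  have hunit : ∀ m : ℤ, m ∈ M → IsUnit ((m : ℤ) : ZMod d) := by
    intro m hm
    obtain ⟨hm0, hmIcc⟩ := Finset.mem_erase.mp hm
    rw [Finset.mem_Icc] at hmIcc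
    have habs : m.natAbs ≤ kp := by omega
    have habs0 : 0 < m.natAbs := by omega
    have hcop' : Nat.Coprime m.natAbs d := by
      by_contra h
      obtain ⟨p, hp, hpm, hpd⟩ := Nat.Prime.not_coprime_iff_dvd.mp h
      exact hcop p hp (le_trans (Nat.le_of_dvd habs0 hpm) habs) hpd
    have hu : IsUnit ((m.natAbs : ℕ) : ZMod d) := (ZMod.isUnit_iff_coprime _ _).mpr hcop'
    rcases Int.natAbs_eq m with h | h
    · rw [h, Int.cast_natCast]; exact hu
    · rw [h, Int.cast_neg, Int.cast_natCast]; exact hu.neg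
  -- compatibility
  have hcompat : ∀ (m : ℤ) (s : ZMod n), (m : ZMod q) * φ s = φ ((m : ZMod n) * s) := by
    intro m s
    rw [← zsmul_eq_mul, ← zsmul_eq_mul, map_zsmul]
  set S' : Finset (ZMod n) := Finset.univ.filter (fun x : ZMod n => φ x ∈ S) with hS'def
  have hS'mem : ∀ x : ZMod n, x ∈ S' ↔ φ x ∈ S := by
    intro x; simp [hS'def]
  -- injectivity of the new splitting map
  have hinjS : Set.InjOn (fun p : ℤ × ZMod n => (p.1 : ZMod n) * p.2) ↑(M ×ˢ S') := by
    rintro ⟨m, s⟩ hms ⟨m', s'⟩ hms' heq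
    simp only [Finset.coe_product, Set.mem_prod, Finset.mem_coe] at hms hms'
    have h1 : (m : ZMod q) * φ s = (m' : ZMod q) * φ s' := by
      rw [hcompat, hcompat]
      exact congrArg φ heq
    have hmem1 : ((m, φ s) : ℤ × ZMod q) ∈ (↑(M ×ˢ S) : Set (ℤ × ZMod q)) :=
      Finset.mem_coe.mpr (Finset.mem_product.mpr ⟨hms.1, (hS'mem s).mp hms.2⟩)
    have hmem2 : ((m', φ s') : ℤ × ZMod q) ∈ (↑(M ×ˢ S) : Set (ℤ × ZMod q)) :=
      Finset.mem_coe.mpr (Finset.mem_product.mpr ⟨hms'.1, (hS'mem s').mp hms'.2⟩)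
    have := hsplit.2.1 hmem1 hmem2 h1
    have h2 : m = m' := congrArg Prod.fst this
    have h3 : φ s = φ s' := congrArg Prod.snd this
    exact Prod.ext h2 (hφinj h3)
  -- image of the new splitting map
  have himg : (fun p : ℤ × ZMod n => (p.1 : ZMod n) * p.2) '' ↑(M ×ˢ S') = {a : ZMod n | a ≠ 0} := by
    ext a
    simp only [Set.mem_image, Set.mem_setOf_eq, Finset.coe_product, Set.mem_prod,
      Finset.mem_coe, Prod.exists]
    constructor
    · rintro ⟨m, s, ⟨hmM, hsS'⟩, rfl⟩
      intro h0
      have hz : (m : ZMod q) * φ s = 0 := by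
        rw [hcompat, h0, map_zero]
      have hmem : (m : ZMod q) * φ s ∈ {a : ZMod q | a ≠ 0} := by
        rw [← hsplit.2.2]
        exact ⟨(m, φ s),
          Finset.mem_coe.mpr (Finset.mem_product.mpr ⟨hmM, (hS'mem s).mp hsS'⟩), rfl⟩
      exact hmem hz
    · intro ha
      have hφa : φ a ≠ 0 := fun h => ha (hφinj (h.trans (map_zero φ).symm))
      have hmem : φ a ∈ (fun p : ℤ × ZMod q => (p.1 : ZMod q) * p.2) '' ↑(M ×ˢ S) := by
        rw [hsplit.2.2]; exact hφa
      obtain ⟨⟨m, t⟩, hmt, heq⟩ := hmem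
      simp only [Finset.coe_product, Set.mem_prod, Finset.mem_coe] at hmt
      -- t is in the range of φ
      have hcast0 : (ZMod.castHom hdvd (ZMod d)) (φ a) = 0 := (hrange (φ a)).mp ⟨a, rfl⟩
      have heq' : (m : ZMod q) * t = φ a := heq
      have heqd : (ZMod.castHom hdvd (ZMod d)) ((m : ZMod q) * t) = 0 := by
        rw [heq']; exact hcast0
      rw [map_mul, map_intCast] at heqd
      have hu := hunit m hmt.1
      have ht0 : (ZMod.castHom hdvd (ZMod d)) t = 0 := by
        rcases hu with ⟨u, hu'⟩
        rw [← hu'] at heqd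
        have := congrArg (fun x => (↑u⁻¹ : ZMod d) * x) heqd
        simpa [← mul_assoc] using this
      obtain ⟨s, rfl⟩ := (hrange t).mpr ht0
      refine ⟨m, s, ⟨hmt.1, (hS'mem s).mpr hmt.2⟩, ?_⟩
      apply hφinj
      rw [← hcompat]
      exact heq'
  -- cardinalities
  have hMcard : M.card = kp + km := by
    rw [hM, Finset.card_erase_of_mem (by
      rw [Finset.mem_Icc]
      constructor <;> [exact neg_nonpos.mpr (by positivity); exact Int.natCast_nonneg kp]),
      Int.card_Icc]
    omega
  have himgF : (M ×ˢ S').image (fun p : ℤ × ZMod n => (p.1 : ZMod n) * p.2)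
      = Finset.univ.erase (0 : ZMod n) := by
    apply Finset.coe_injective
    rw [Finset.coe_image, himg]
    ext a
    simp
  have hcardimg : ((M ×ˢ S').image (fun p : ℤ × ZMod n => (p.1 : ZMod n) * p.2)).card
      = (kp + km) * S'.card := by
    rw [Finset.card_image_of_injOn hinjS, Finset.card_product, hMcard]
  have hcount : (kp + km) * S'.card = n - 1 := by
    rw [← hcardimg, himgF, Finset.card_erase_of_mem (Finset.mem_univ 0), Finset.card_univ,
      ZMod.card]
  have hqd : q - d = ((kp + km) * d) * S'.card := by
    have h1 : q - d = d * (n - 1) := by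
      rw [Nat.mul_sub, hqdn, Nat.mul_one]
    rw [h1, ← hcount]
    ring
  have hkpd : 0 < (kp + km) * d := by positivity
  refine ⟨⟨S'.card, hqd⟩, S', ⟨?_, hinjS, himg⟩, ?_⟩
  · simp [hM]
  · rw [hqd, Nat.mul_div_cancel_left _ hkpd]
end

section
/- Let 1 ≤ k₋ < k₊ and n ≥ 1 be integers, and suppose there is a splitting ℤ_{(k₊+k₋)n+1} = (M,S) with multiplier set M = [-k₋,k₊]* = {m ∈ ℤ : -k₋ ≤ m ≤ k₊, m ≠ 0} and |S| = n. Suppose the positive integer d divides (k₊+k₋)n+1 and no prime p ≤ k₊ divides d. Then n' := ((k₊+k₋)n+1−d)/((k₊+k₋)·d) is a non-negative integer and there is a splitting ℤ_{(k₊+k₋)n'+1} = (M,S') with the same multiplier set M and |S'| = n'. (Equivalently, if the (k₊,k₋,n)-quasi-cross lattice tiles ℝⁿ then the (k₊,k₋,n')-quasi-cross lattice tiles ℝ^{n'}.) -/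
lemma splitting_count {q : ℕ} (hq : 0 < q) {M : Finset ℤ} {S : Finset (ZMod q)}
    (h : IsSplitting q M S) : M.card * S.card = q - 1 := by
  haveI : NeZero q := ⟨hq.ne'⟩
  obtain ⟨-, hinj, himg⟩ := h
  have h2 : {a : ZMod q | a ≠ 0} = ↑(Finset.univ.erase (0 : ZMod q)) := by
    ext a; simp
  have h1 := Set.ncard_image_of_injOn hinj
  rw [himg, h2, Set.ncard_coe_finset, Set.ncard_coe_finset,
    Finset.card_erase_of_mem (Finset.mem_univ _), Finset.card_univ, ZMod.card,
    Finset.card_product] at h1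
  exact h1.symm

lemma splitting_quotient {q d e : ℕ} (hd : 0 < d) (he : 0 < e) (hq : q = d * e)
    {M : Finset ℤ} (hM : ∀ m ∈ M, IsUnit ((m : ℤ) : ZMod d))
    {S : Finset (ZMod q)} (h : IsSplitting q M S) :
    ∃ S' : Finset (ZMod e), IsSplitting e M S' := by
  classical
  obtain ⟨hM0, hinj, himg⟩ := h
  -- the additive hom `ℤ →+ ZMod q`, `a ↦ d * a`
  set f : ℤ →+ ZMod q :=
    { toFun := fun a => ((d * a : ℤ) : ZMod q)
      map_zero' := by simp
      map_add' := by intro a b; push_cast; ring } with hf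
  have hfe : f (e : ℤ) = 0 := by
    show ((d * (e : ℤ) : ℤ) : ZMod q) = 0
    rw [ZMod.intCast_zmod_eq_zero_iff_dvd]
    exact ⟨1, by push_cast [hq]; ring⟩
  set ψ : ZMod e →+ ZMod q := ZMod.lift e ⟨f, hfe⟩ with hψ
  have ψcoe : ∀ a : ℤ, ψ (a : ZMod e) = ((d * a : ℤ) : ZMod q) := fun a =>
    ZMod.lift_coe e ⟨f, hfe⟩ a
  have ψ_int_mul : ∀ (m : ℤ) (x : ZMod e),
      ψ ((m : ZMod e) * x) = (m : ZMod q) * ψ x := by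
    intro m x
    obtain ⟨a, rfl⟩ := ZMod.intCast_surjective x
    have : ((m : ZMod e) * (a : ZMod e)) = ((m * a : ℤ) : ZMod e) := by push_cast; ring
    rw [this, ψcoe, ψcoe]
    push_cast; ring
  have ψinj : Function.Injective ψ := by
    rw [hψ, ZMod.lift_injective]
    intro a ha
    have : ((d * a : ℤ) : ZMod q) = 0 := ha
    rw [ZMod.intCast_zmod_eq_zero_iff_dvd, hq] at this
    push_cast at this
    rw [ZMod.intCast_zmod_eq_zero_iff_dvd]
    exact (mul_dvd_mul_iff_left (by exact_mod_cast hd.ne' : (d : ℤ) ≠ 0)).mp this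
  have hde : d ∣ q := ⟨e, hq⟩
  set P : ZMod q → Prop := fun s => (ZMod.castHom hde (ZMod d)) s = 0 with hP
  have hPψ : ∀ x : ZMod e, P (ψ x) := by
    intro x
    obtain ⟨a, rfl⟩ := ZMod.intCast_surjective x
    rw [ψcoe, hP]
    simp only [map_intCast]
    push_cast
    simp
  have hψsurj : ∀ s : ZMod q, P s → ∃ x : ZMod e, ψ x = s := by
    intro s hs
    obtain ⟨a, rfl⟩ := ZMod.intCast_surjective s
    rw [hP] at hs
    simp only [map_intCast] at hs
    rw [ZMod.intCast_zmod_eq_zero_iff_dvd] at hs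
    obtain ⟨c, rfl⟩ := hs
    exact ⟨(c : ZMod e), ψcoe c⟩
  have hPmul : ∀ m ∈ M, ∀ s : ZMod q, P ((m : ZMod q) * s) ↔ P s := by
    intro m hm s
    rw [hP]
    simp only [map_mul, map_intCast]
    exact IsUnit.mul_right_eq_zero (hM m hm)
  -- the new splitter set
  set S0 : Finset (ZMod q) := S.filter P with hS0
  set S' : Finset (ZMod e) := S0.preimage ψ ψinj.injOn with hS'
  have memS' : ∀ x : ZMod e, x ∈ S' ↔ ψ x ∈ S := by
    intro x
    rw [hS', Finset.mem_preimage, hS0, Finset.mem_filter]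
    exact ⟨fun h => h.1, fun h => ⟨h, hPψ x⟩⟩
  refine ⟨S', hM0, ?_, ?_⟩
  · rintro ⟨m1, x1⟩ h1 ⟨m2, x2⟩ h2 heq
    simp only [Finset.coe_product, Set.mem_prod, Finset.mem_coe] at h1 h2
    have heq' : (m1 : ZMod q) * ψ x1 = (m2 : ZMod q) * ψ x2 := by
      rw [← ψ_int_mul, ← ψ_int_mul]
      exact congrArg ψ heq
    have hmem1 : (m1, ψ x1) ∈ (↑((M ×ˢ S)) : Set (ℤ × ZMod q)) := by
      simp only [Finset.coe_product, Set.mem_prod, Finset.mem_coe]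
      exact ⟨h1.1, (memS' x1).mp h1.2⟩
    have hmem2 : (m2, ψ x2) ∈ (↑((M ×ˢ S)) : Set (ℤ × ZMod q)) := by
      simp only [Finset.coe_product, Set.mem_prod, Finset.mem_coe]
      exact ⟨h2.1, (memS' x2).mp h2.2⟩
    have := hinj hmem1 hmem2 heq'
    rw [Prod.mk.injEq] at this
    exact Prod.ext this.1 (ψinj this.2)
  · ext a
    simp only [Set.mem_image, Set.mem_setOf_eq, Finset.coe_product, Set.mem_prod,
      Finset.mem_coe, Prod.exists]
    constructor
    · rintro ⟨m, x, ⟨hm, hx⟩, rfl⟩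
      intro h0
      have : (m : ZMod q) * ψ x = 0 := by
        rw [← ψ_int_mul, h0, map_zero]
      have hmem : (m, ψ x) ∈ (↑((M ×ˢ S)) : Set (ℤ × ZMod q)) := by
        simp only [Finset.coe_product, Set.mem_prod, Finset.mem_coe]
        exact ⟨hm, (memS' x).mp hx⟩
      have : (m : ZMod q) * ψ x ∈ {a : ZMod q | a ≠ 0} := by
        rw [← himg]; exact ⟨(m, ψ x), hmem, rfl⟩
      exact this ‹(m : ZMod q) * ψ x = 0›
    · intro ha
      have hψa : ψ a ≠ 0 := fun h0 => ha (ψinj (by rw [h0, map_zero]))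
      have : ψ a ∈ {b : ZMod q | b ≠ 0} := hψa
      rw [← himg] at this
      obtain ⟨⟨m, s⟩, hms, heq⟩ := this
      simp only [Finset.coe_product, Set.mem_prod, Finset.mem_coe] at hms
      have heq2 : (m : ZMod q) * s = ψ a := heq
      have hPs : P s := by
        rw [← hPmul m hms.1 s, heq2]
        exact hPψ a
      obtain ⟨x, rfl⟩ := hψsurj s hPs
      refine ⟨m, x, ⟨hms.1, (memS' x).mpr hms.2⟩, ?_⟩
      apply ψinj
      rw [ψ_int_mul]
      exact heq

theorem stmt_14 (kp km n : ℕ) (hkm : 1 ≤ km) (hk : km < kp) (hn : 1 ≤ n)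
    (S : Finset (ZMod ((kp + km) * n + 1)))
    (hsplit : IsSplitting ((kp + km) * n + 1)
        ((Finset.Icc (-(km : ℤ)) (kp : ℤ)).erase 0) S)
    (hcard : S.card = n)
    (d : ℕ) (hd : 0 < d) (hdvd : d ∣ (kp + km) * n + 1)
    (hcop : ∀ p : ℕ, Nat.Prime p → p ≤ kp → ¬ p ∣ d) :
    ∃ n' : ℕ, n' * ((kp + km) * d) = (kp + km) * n + 1 - d ∧
      ∃ S' : Finset (ZMod ((kp + km) * n' + 1)),
        IsSplitting ((kp + km) * n' + 1)
          ((Finset.Icc (-(km : ℤ)) (kp : ℤ)).erase 0) S' ∧ S'.card = n' := by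
  classical
  set q : ℕ := (kp + km) * n + 1 with hqdef
  obtain ⟨e, hq⟩ := hdvd
  have he : 0 < e := by
    rcases Nat.eq_zero_or_pos e with h | h
    · have : q = 0 := by rw [hq, h, mul_zero]
      omega
    · exact h
  set M : Finset ℤ := (Finset.Icc (-(km : ℤ)) (kp : ℤ)).erase 0 with hM
  have hMunit : ∀ m ∈ M, IsUnit ((m : ℤ) : ZMod d) := by
    intro m hm
    rw [hM, Finset.mem_erase, Finset.mem_Icc] at hm
    obtain ⟨hm0, hml, hmr⟩ := hm
    have habs : m.natAbs ≤ kp := by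
      rcases le_or_gt 0 m with h | h
      · omega
      · omega
    have hpos : 0 < m.natAbs := Int.natAbs_pos.mpr hm0
    have hcopn : Nat.Coprime m.natAbs d := by
      by_contra hg
      have hg1 : Nat.gcd m.natAbs d ≠ 1 := hg
      have hg0 : Nat.gcd m.natAbs d ≠ 0 := by
        intro h0
        exact hpos.ne' (Nat.eq_zero_of_gcd_eq_zero_left h0) |>.elim
      set g := Nat.gcd m.natAbs d
      have hp : Nat.Prime g.minFac := Nat.minFac_prime hg1
      have hpd : g.minFac ∣ d := (Nat.minFac_dvd g).trans (Nat.gcd_dvd_right _ _)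
      have hpm : g.minFac ∣ m.natAbs := (Nat.minFac_dvd g).trans (Nat.gcd_dvd_left _ _)
      have : g.minFac ≤ kp := le_trans (Nat.le_of_dvd hpos hpm) habs
      exact hcop g.minFac hp this hpd
    have hu : IsUnit ((m.natAbs : ZMod d)) := (ZMod.isUnit_iff_coprime _ _).mpr hcopn
    rcases Int.natAbs_eq m with h | h
    · rw [h, Int.cast_natCast]; exact hu
    · rw [h, Int.cast_neg, Int.cast_natCast]; exact hu.neg
  have hMcard : M.card = kp + km := by
    rw [hM, Finset.card_erase_of_mem, Int.card_Icc]
    · have : ((kp : ℤ) + 1 - (-(km : ℤ))).toNat = kp + km + 1 := by omega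
      rw [this]
      omega
    · rw [Finset.mem_Icc]; constructor <;> omega
  obtain ⟨S', hS'⟩ := splitting_quotient hd he hq hMunit hsplit
  have hcount := splitting_count he hS'
  rw [hMcard] at hcount
  set n' := S'.card with hn'
  have he1 : e = (kp + km) * n' + 1 := by omega
  refine ⟨n', ?_, ?_⟩
  · have h1 : n' * ((kp + km) * d) = ((kp + km) * n') * d := by ring
    rw [h1, hcount, Nat.sub_mul, one_mul]
    have : e * d = q := by rw [hq]; ring
    omega
  · rw [show (kp + km) * n' + 1 = e from he1.symm]
    exact ⟨S', hS', rfl⟩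
end

section
/- Let 1 ≤ k₋ < k₊ and n ≥ 1 be integers, and let p be a prime with p > k₊, p ≢ 1 (mod k₊+k₋), and p ≠ k₊+k₋. If p divides (k₊+k₋)n+1 (equivalently, n ≡ −(k₊+k₋)⁻¹ (mod p)), then there is no splitting ℤ_{(k₊+k₋)n+1} = (M,S) with multiplier set M = [-k₋,k₊]* = {m ∈ ℤ : -k₋ ≤ m ≤ k₊, m ≠ 0} and |S| = n. (Equivalently, the (k₊,k₋,n)-quasi-cross does not lattice tile ℝⁿ for such n.) -/
theorem stmt_16 (kp km n : ℕ) (hkm : 1 ≤ km) (hk : km < kp) (hn : 1 ≤ n)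
    (p : ℕ) (hp : Nat.Prime p) (hpk : kp < p)
    (hp1 : p % (kp + km) ≠ 1) (hpne : p ≠ kp + km)
    (hdvd : p ∣ (kp + km) * n + 1) :
    ¬ ∃ S : Finset (ZMod ((kp + km) * n + 1)),
        IsSplitting ((kp + km) * n + 1)
          ((Finset.Icc (-(km : ℤ)) (kp : ℤ)).erase 0) S ∧ S.card = n := by
  rintro ⟨S, ⟨h0, hinj, himg⟩, hcard⟩
  haveI : Fact p.Prime := ⟨hp⟩
  haveI : NeZero ((kp + km) * n + 1) := ⟨Nat.succ_ne_zero _⟩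
  have hppos : 0 < p := hp.pos
  obtain ⟨t, ht⟩ := hdvd
  have htpos : 0 < t := by
    rcases Nat.eq_zero_or_pos t with h | h
    · rw [h, mul_zero] at ht; omega
    · exact h
  set M : Finset ℤ := (Finset.Icc (-(km : ℤ)) (kp : ℤ)).erase 0 with hMdef
  have h0mem : (0 : ℤ) ∈ Finset.Icc (-(km : ℤ)) (kp : ℤ) :=
    Finset.mem_Icc.mpr ⟨neg_nonpos.mpr (Nat.cast_nonneg km), Nat.cast_nonneg kp⟩
  have hMcard : M.card = kp + km := by
    rw [hMdef, Finset.card_erase_of_mem h0mem, Int.card_Icc]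
    omega
  have hunit : ∀ m : ℤ, m ∈ M → (m : ZMod p) ≠ 0 := by
    intro m hm hcast
    rw [ZMod.intCast_zmod_eq_zero_iff_dvd] at hcast
    have h1 : m ≠ 0 := (Finset.mem_erase.mp hm).1
    have h2 : -(km : ℤ) ≤ m ∧ m ≤ kp := by
      simpa [Finset.mem_Icc] using (Finset.mem_erase.mp hm).2
    have hd : p ∣ m.natAbs := by
      have h5 := Int.natAbs_dvd_natAbs.mpr hcast
      simpa using h5
    have h3 : p ≤ m.natAbs := Nat.le_of_dvd (by omega) hd
    omega
  let φ : ZMod ((kp + km) * n + 1) →+* ZMod p := ZMod.castHom ⟨t, ht⟩ (ZMod p)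
  classical
  set S₀ : Finset (ZMod ((kp + km) * n + 1)) := S.filter (fun s => φ s = 0) with hS₀
  set T : Finset (ZMod ((kp + km) * n + 1)) :=
    Finset.univ.filter (fun a => a ≠ 0 ∧ φ a = 0) with hT
  have hTim : T = (M ×ˢ S₀).image
      (fun pr : ℤ × ZMod ((kp + km) * n + 1) => (pr.1 : ZMod ((kp + km) * n + 1)) * pr.2) := by
    ext a
    simp only [hT, Finset.mem_filter, Finset.mem_univ, true_and, Finset.mem_image,
      Finset.mem_product, hS₀]
    constructor
    · rintro ⟨ha0, haφ⟩
      have hmem : a ∈ {a : ZMod ((kp + km) * n + 1) | a ≠ 0} := ha0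
      rw [← himg] at hmem
      obtain ⟨⟨m, s⟩, hms, heq⟩ := hmem
      rw [Finset.mem_coe, Finset.mem_product] at hms
      refine ⟨⟨m, s⟩, ⟨hms.1, hms.2, ?_⟩, heq⟩
      have hφa : φ a = (m : ZMod p) * φ s := by
        rw [← heq]
        show φ ((m : ZMod ((kp + km) * n + 1)) * s) = _
        rw [map_mul, map_intCast]
      rw [haφ] at hφa
      rcases mul_eq_zero.mp hφa.symm with h | h
      · exact absurd h (hunit m hms.1)
      · exact h
    · rintro ⟨⟨m, s⟩, ⟨hm, hsS, hsφ⟩, heq⟩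
      constructor
      · have : a ∈ {a : ZMod ((kp + km) * n + 1) | a ≠ 0} := by
          rw [← himg]
          exact ⟨⟨m, s⟩, by rw [Finset.mem_coe, Finset.mem_product]; exact ⟨hm, hsS⟩, heq⟩
        exact this
      · rw [← heq]
        show φ ((m : ZMod ((kp + km) * n + 1)) * s) = 0
        rw [map_mul, map_intCast, hsφ, mul_zero]
  have hTcard : T.card = (kp + km) * S₀.card := by
    rw [hTim, Finset.card_image_of_injOn, Finset.card_product, hMcard]
    exact hinj.mono (by
      intro x hx
      rw [Finset.mem_coe, Finset.mem_product] at hx ⊢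
      exact ⟨hx.1, Finset.filter_subset _ _ hx.2⟩)
  set T' : Finset (ZMod ((kp + km) * n + 1)) := Finset.univ.filter (fun a => φ a = 0) with hT'
  have hT'card : T'.card = t := by
    rw [← Finset.card_range t]
    symm
    apply Finset.card_bij (fun i _ => ((p * i : ℕ) : ZMod ((kp + km) * n + 1)))
    · intro i hi
      rw [hT', Finset.mem_filter]
      refine ⟨Finset.mem_univ _, ?_⟩
      rw [map_natCast]
      push_cast
      rw [ZMod.natCast_self, zero_mul]
    · intro i hi j hj hij
      rw [Finset.mem_range] at hi hj
      have h1 : p * i < (kp + km) * n + 1 := by rw [ht]; exact (Nat.mul_lt_mul_left hppos).mpr hi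
      have h2 : p * j < (kp + km) * n + 1 := by rw [ht]; exact (Nat.mul_lt_mul_left hppos).mpr hj
      have hv := congrArg ZMod.val hij
      rw [ZMod.val_natCast_of_lt h1, ZMod.val_natCast_of_lt h2] at hv
      exact Nat.eq_of_mul_eq_mul_left hppos hv
    · intro a ha
      rw [hT', Finset.mem_filter] at ha
      have hφ : (a.val : ZMod p) = 0 := by
        have h := ha.2
        rwa [ZMod.castHom_apply, ← ZMod.natCast_val] at h
      rw [ZMod.natCast_eq_zero_iff] at hφ
      obtain ⟨i, hi⟩ := hφ
      refine ⟨i, ?_, ?_⟩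
      · rw [Finset.mem_range]
        have hv : a.val < (kp + km) * n + 1 := ZMod.val_lt a
        rw [hi, ht] at hv
        exact Nat.lt_of_mul_lt_mul_left hv
      · rw [← hi]
        exact ZMod.natCast_rightInverse a
  have hTT' : T = T'.erase 0 := by
    ext a
    simp only [hT, hT', Finset.mem_filter, Finset.mem_univ, true_and, Finset.mem_erase]
  have h0T' : (0 : ZMod ((kp + km) * n + 1)) ∈ T' := by
    rw [hT', Finset.mem_filter]
    exact ⟨Finset.mem_univ _, map_zero φ⟩
  have hTcard' : T.card = t - 1 := by
    rw [hTT', Finset.card_erase_of_mem h0T', hT'card]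
  have hKdvd : (kp + km) ∣ t - 1 := ⟨S₀.card, by omega⟩
  have hK2 : 1 < kp + km := by omega
  have ht1 : (1 : ℕ) ≡ t [MOD kp + km] := (Nat.modEq_iff_dvd' htpos).mpr hKdvd
  have hq1 : p * t ≡ 1 [MOD kp + km] := by
    rw [← ht]
    show ((kp + km) * n + 1) % (kp + km) = 1 % (kp + km)
    rw [Nat.add_comm, Nat.add_mul_mod_self_left]
  have hfin : p ≡ 1 [MOD kp + km] := by
    calc p = p * 1 := (mul_one p).symm
    _ ≡ p * t [MOD kp + km] := ht1.mul_left p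
    _ ≡ 1 [MOD kp + km] := hq1
  have hmod : p % (kp + km) = 1 := by
    have h1 : (1 : ℕ) % (kp + km) = 1 := Nat.mod_eq_of_lt hK2
    rw [Nat.ModEq] at hfin
    omega
  exact hp1 hmod
end

section
/- Let 1 ≤ k₋ < k₊ and n ≥ 1 be integers, and let p be a prime with p ≡ 1 (mod k₊+k₋). Suppose there is no splitting ℤ_{(k₊+k₋)n+1} = (M,S) with multiplier set M = [-k₋,k₊]* = {m ∈ ℤ : -k₋ ≤ m ≤ k₊, m ≠ 0} and |S| = n. Then for every positive integer i, setting n' = (((k₊+k₋)n+1)·pⁱ − 1)/(k₊+k₋) (which is an integer since p ≡ 1 (mod k₊+k₋)), there is no splitting ℤ_{(k₊+k₋)n'+1} = (M,S') with the same multiplier set M and |S'| = n'. (Equivalently, if the (k₊,k₋,n)-quasi-cross does not lattice tile ℝⁿ, then the (k₊,k₋,n')-quasi-cross does not lattice tile ℝ^{n'}.) -/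
/-
A splitting of `ℤ_{qt}` by `M`, where every `m ∈ M` is a unit modulo `t`, restricts to a
splitting of the subgroup `t ℤ_{qt} ≅ ℤ_q`: that subgroup is the kernel of reduction modulo `t`,
so `m·y` lies in it only if `y` does. Take `q = (k₊ + k₋) n + 1` and `t = pⁱ`; since
`p ≡ 1 (mod k₊ + k₋)` forces `p > k₊ + k₋`, every multiplier is prime to `p`. A splitting for
`n'` therefore yields a splitting of `ℤ_q`, and counting shows its splitter set has
`(q - 1) / (k₊ + k₋) = n` elements.
-/

open Function

namespace ZMod

variable (q t : ℕ)

def mulEmbedding : ZMod q →+ ZMod (q * t) :=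
  ZMod.lift q ⟨zmultiplesHom _ (t : ZMod (q * t)), by simp [← Nat.cast_mul]⟩

variable {q t}

lemma mulEmbedding_intCast (k : ℤ) : mulEmbedding q t k = k * t := by
  simp [mulEmbedding, zsmul_eq_mul]

lemma mulEmbedding_injective (ht : t ≠ 0) : Injective (mulEmbedding q t) := by
  refine (injective_iff_map_eq_zero _).mpr fun a ha => ?_
  obtain ⟨k, rfl⟩ := intCast_surjective a
  rw [mulEmbedding_intCast, ← Int.cast_natCast, ← Int.cast_mul, intCast_zmod_eq_zero_iff_dvd,
    Nat.cast_mul] at ha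
  rw [intCast_zmod_eq_zero_iff_dvd]
  exact Int.dvd_of_mul_dvd_mul_right (Int.natCast_ne_zero.mpr ht) ha

lemma mem_range_mulEmbedding_iff (x : ZMod (q * t)) :
    x ∈ Set.range (mulEmbedding q t) ↔ castHom (dvd_mul_left t q) (ZMod t) x = 0 := by
  constructor
  · rintro ⟨a, rfl⟩
    obtain ⟨j, rfl⟩ := intCast_surjective a
    simp [mulEmbedding_intCast]
  · obtain ⟨k, rfl⟩ := intCast_surjective x
    rw [map_intCast, intCast_zmod_eq_zero_iff_dvd]
    rintro ⟨j, rfl⟩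
    exact ⟨j, by rw [mulEmbedding_intCast]; push_cast; ring⟩

end ZMod

namespace IsSplitting

variable {q N : ℕ} {M : Finset ℤ}

lemma card_mul [NeZero q] {S : Finset (ZMod q)} (h : IsSplitting q M S) :
    M.card * S.card = q - 1 := by
  classical
  obtain ⟨-, hinj, himg⟩ := h
  have himg' : (M ×ˢ S).image (fun p : ℤ × ZMod q => (p.1 : ZMod q) * p.2) =
      Finset.univ.erase 0 := by
    apply Finset.coe_injective
    rw [Finset.coe_image, himg]
    ext; simp
  rw [← Finset.card_product, ← Finset.card_image_of_injOn hinj, himg',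
    Finset.card_erase_of_mem (Finset.mem_univ _), Finset.card_univ, ZMod.card]

lemma comap (ι : ZMod q →+ ZMod N) (hι : Injective ι)
    (hsat : ∀ m ∈ M, ∀ y, (m : ZMod N) * y ∈ Set.range ι → y ∈ Set.range ι)
    {S' : Finset (ZMod N)} (h : IsSplitting N M S') :
    IsSplitting q M (S'.preimage ι hι.injOn) := by
  have hmul (m : ℤ) (a : ZMod q) : ι (m * a) = m * ι a := by
    rw [← zsmul_eq_mul, map_zsmul, zsmul_eq_mul]
  obtain ⟨h0, hinj, himg⟩ := h
  refine ⟨h0, ?_, ?_⟩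
  · rintro ⟨m₁, a₁⟩ h₁ ⟨m₂, a₂⟩ h₂ heq
    simp only [Finset.coe_product, Set.mem_prod, Finset.mem_coe, Finset.mem_preimage] at h₁ h₂
    have := hinj (x₁ := (m₁, ι a₁)) (x₂ := (m₂, ι a₂)) (by simpa using h₁) (by simpa using h₂)
      (by simpa only [hmul] using congrArg ι heq)
    simp only [Prod.mk.injEq] at this ⊢
    exact ⟨this.1, hι this.2⟩
  · ext b
    constructor
    · rintro ⟨⟨m, a⟩, hma, rfl⟩ hzero
      have : (m : ZMod N) * ι a ∈ {x : ZMod N | x ≠ 0} :=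
        himg ▸ ⟨(m, ι a), by simpa using hma, rfl⟩
      exact this (by rw [← hmul, show (m : ZMod q) * a = 0 from hzero, map_zero])
    · intro hb
      have : ι b ∈ {x : ZMod N | x ≠ 0} := (map_ne_zero_iff ι hι).mpr hb
      rw [← himg] at this
      obtain ⟨⟨m, y⟩, hmy, hy⟩ := this
      simp only [Finset.coe_product, Set.mem_prod, Finset.mem_coe] at hmy hy
      obtain ⟨a, rfl⟩ := hsat m hmy.1 y (hy ▸ Set.mem_range_self b)
      exact ⟨(m, a), by simpa using hmy, hι (by simpa [hmul] using hy)⟩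

lemma of_mul {t : ℕ} (ht : t ≠ 0) (hM : ∀ m ∈ M, IsUnit (m : ZMod t))
    {S' : Finset (ZMod (q * t))} (h : IsSplitting (q * t) M S') :
    ∃ S : Finset (ZMod q), IsSplitting q M S := by
  refine ⟨_, h.comap _ (ZMod.mulEmbedding_injective ht) fun m hm y hmy => ?_⟩
  rw [ZMod.mem_range_mulEmbedding_iff, map_mul, map_intCast] at hmy
  exact (ZMod.mem_range_mulEmbedding_iff y).mpr ((hM m hm).mul_right_eq_zero.mp hmy)

end IsSplitting

lemma isUnit_intCast_zmod_prime_pow {p : ℕ} (hp : p.Prime) (i : ℕ) {m : ℤ} (hm₀ : m ≠ 0)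
    (hm : m.natAbs < p) : IsUnit (m : ZMod (p ^ i)) := by
  rw [ZMod.coe_int_isUnit_iff_isCoprime, Nat.cast_pow]
  refine IsCoprime.pow_left ((Nat.prime_iff_prime_int.mp hp).coprime_iff_not_dvd.mpr fun hdvd => ?_)
  exact hm₀ (Int.eq_zero_of_dvd_of_natAbs_lt_natAbs hdvd (by simpa using hm))

lemma card_Icc_erase_zero (a b : ℕ) : ((Finset.Icc (-(a : ℤ)) b).erase 0).card = b + a := by
  rw [Finset.card_erase_of_mem (by simp), Int.card_Icc]
  omega

lemma lt_of_mod_eq_one_of_prime {p k : ℕ} (hp : p.Prime) (h : p % k = 1) : k < p := by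
  by_contra! hpk
  rcases hpk.lt_or_eq with hlt | rfl
  · exact hp.ne_one ((Nat.mod_eq_of_lt hlt).symm.trans h)
  · simp at h

theorem stmt_17_general (kp km n : ℕ) (p : ℕ) (hp : Nat.Prime p) (hp1 : p % (kp + km) = 1)
    (hno : ¬ ∃ S : Finset (ZMod ((kp + km) * n + 1)),
        IsSplitting ((kp + km) * n + 1)
          ((Finset.Icc (-(km : ℤ)) (kp : ℤ)).erase 0) S ∧ S.card = n) :
    ∀ i : ℕ, 1 ≤ i → ∀ n' : ℕ,
      (kp + km) * n' = ((kp + km) * n + 1) * p ^ i - 1 →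
      ¬ ∃ S' : Finset (ZMod ((kp + km) * n' + 1)),
          IsSplitting ((kp + km) * n' + 1)
            ((Finset.Icc (-(km : ℤ)) (kp : ℤ)).erase 0) S' ∧ S'.card = n' := by
  rintro i - n' hn'
  have hq : 0 < ((kp + km) * n + 1) * p ^ i := Nat.mul_pos (Nat.succ_pos _) (pow_pos hp.pos i)
  rw [show (kp + km) * n' + 1 = ((kp + km) * n + 1) * p ^ i by omega]
  rintro ⟨S', hS', -⟩
  have hkp := lt_of_mod_eq_one_of_prime hp hp1
  obtain ⟨S, hS⟩ := hS'.of_mul (pow_ne_zero i hp.ne_zero) fun m hm => by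
    rw [Finset.mem_erase, Finset.mem_Icc] at hm
    exact isUnit_intCast_zmod_prime_pow hp i hm.1 (by omega)
  have hcard := hS.card_mul
  rw [card_Icc_erase_zero, Nat.add_sub_cancel] at hcard
  have hK : kp + km ≠ 0 := fun h => hp.ne_one (by simpa [h] using hp1)
  exact hno ⟨S, hS, Nat.eq_of_mul_eq_mul_left (Nat.pos_of_ne_zero hK) hcard⟩

theorem stmt_17 (kp km n : ℕ) (hkm : 1 ≤ km) (hk : km < kp) (hn : 1 ≤ n)
    (p : ℕ) (hp : Nat.Prime p) (hp1 : p % (kp + km) = 1)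
    (hno : ¬ ∃ S : Finset (ZMod ((kp + km) * n + 1)),
        IsSplitting ((kp + km) * n + 1)
          ((Finset.Icc (-(km : ℤ)) (kp : ℤ)).erase 0) S ∧ S.card = n) :
    ∀ i : ℕ, 1 ≤ i → ∀ n' : ℕ,
      (kp + km) * n' = ((kp + km) * n + 1) * p ^ i - 1 →
      ¬ ∃ S' : Finset (ZMod ((kp + km) * n' + 1)),
          IsSplitting ((kp + km) * n' + 1)
            ((Finset.Icc (-(km : ℤ)) (kp : ℤ)).erase 0) S' ∧ S'.card = n' :=
  stmt_17_general kp km n p hp hp1 hno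
end

section
/- Let n be an integer with n > 2 and n ≡ 2 (mod 9). Then there is no splitting ℤ_{4n+1} = (M,S) with multiplier set M = {-1,1,2,3} and |S| = n. (Equivalently, the (3,1,n)-quasi-cross does not lattice tile ℝⁿ when n ≡ 2 (mod 9) and n > 2.) -/
open Finset

namespace Split19

-- all fibers of castHom have the same cardinality
lemma fiber_card (q k : ℕ) [NeZero q] [NeZero k] (hd : k ∣ q) (t : ZMod k) :
    (univ.filter fun a : ZMod q => ZMod.castHom hd (ZMod k) a = t).card = q / k := by
  set π := ZMod.castHom hd (ZMod k) with hπ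
  have hsurj : Function.Surjective π := ZMod.ringHom_surjective π
  have hfib : ∀ u : ZMod k,
      (univ.filter fun a : ZMod q => π a = u).card
        = (univ.filter fun a : ZMod q => π a = 0).card := by
    intro u
    obtain ⟨d, hdu⟩ := hsurj u
    apply Finset.card_bij (fun a _ => a - d)
    · intro a ha
      simp only [mem_filter, mem_univ, true_and] at ha ⊢
      rw [map_sub, ha, hdu, sub_self]
    · intro a _ b _ h
      exact sub_left_injective h
    · intro b hb
      simp only [mem_filter, mem_univ, true_and] at hb ⊢
      exact ⟨b + d, by rw [map_add, hb, hdu, zero_add], by ring⟩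
  have htot : (univ : Finset (ZMod q)).card
      = ∑ u : ZMod k, (univ.filter fun a : ZMod q => π a = u).card :=
    Finset.card_eq_sum_card_fiberwise (fun x _ => mem_univ _)
  have hq : q = k * (univ.filter fun a : ZMod q => π a = 0).card := by
    have h1 : (univ : Finset (ZMod q)).card = q := by rw [card_univ, ZMod.card q]
    rw [h1] at htot
    refine htot.trans ?_
    rw [Finset.sum_congr rfl (fun u _ => hfib u), Finset.sum_const, card_univ,
      ZMod.card k, smul_eq_mul]
  rw [hfib t]
  exact (Nat.div_eq_of_eq_mul_left (Nat.pos_of_ne_zero (NeZero.ne k))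
    (hq.trans (mul_comm _ _))).symm


lemma count_key (q k : ℕ) [NeZero q] [NeZero k] (hd : k ∣ q)
    (M : Finset ℤ) (S : Finset (ZMod q)) (hS : IsSplitting q M S) (t : ZMod k) :
    (∑ p ∈ ((M ×ˢ (univ : Finset (ZMod k))).filter
        fun p => (p.1 : ZMod k) * p.2 = t),
      (S.filter fun s => ZMod.castHom hd (ZMod k) s = p.2).card)
      + (if t = 0 then 1 else 0) = q / k := by
  classical
  set π := ZMod.castHom hd (ZMod k) with hπ
  set f : ℤ × ZMod q → ZMod q := fun p => (p.1 : ZMod q) * p.2 with hf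
  -- Step A: the sum equals the card of pairs whose product maps to t
  have hA : ((M ×ˢ S).filter fun p => π (f p) = t).card
      = ∑ p ∈ ((M ×ˢ (univ : Finset (ZMod k))).filter
          fun p => (p.1 : ZMod k) * p.2 = t),
        (S.filter fun s => π s = p.2).card := by
    have hmap : ∀ p ∈ (M ×ˢ S).filter fun p => π (f p) = t,
        (p.1, π p.2) ∈ (M ×ˢ (univ : Finset (ZMod k))).filter
          fun p => (p.1 : ZMod k) * p.2 = t := by
      intro p hp
      simp only [mem_filter, mem_product, mem_univ, and_true, true_and] at hp ⊢
      refine ⟨hp.1.1, ?_⟩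
      have : π (f p) = (p.1 : ZMod k) * π p.2 := by
        simp [hf, map_mul, map_intCast]
      rw [← this, hp.2]
    rw [Finset.card_eq_sum_card_fiberwise hmap]
    refine Finset.sum_congr rfl ?_
    rintro ⟨m, r⟩ hmr
    simp only [mem_filter, mem_product, mem_univ, and_true] at hmr
    have hfe : ((M ×ˢ S).filter fun p => π (f p) = t).filter
          (fun p => (p.1, π p.2) = (m, r))
        = (M ×ˢ S).filter fun p => p.1 = m ∧ π p.2 = r := by
      rw [Finset.filter_filter]
      refine Finset.filter_congr ?_
      intro p hp
      constructor
      · rintro ⟨-, h2⟩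
        exact ⟨congrArg Prod.fst h2, congrArg Prod.snd h2⟩
      · rintro ⟨h1, h2⟩
        refine ⟨?_, by rw [Prod.ext_iff]; exact ⟨h1, h2⟩⟩
        have : π (f p) = (p.1 : ZMod k) * π p.2 := by
          simp [hf, map_mul, map_intCast]
        rw [this, h1, h2, hmr.2]
    rw [hfe, Finset.filter_product (fun a : ℤ => a = m) (fun b => π b = r),
      Finset.card_product, Finset.filter_eq',
      if_pos hmr.1, Finset.card_singleton, one_mul]
  -- Step B: that card equals the card of nonzero elements in fiber t
  have hB : ((M ×ˢ S).filter fun p => π (f p) = t).card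
      = (univ.filter fun a : ZMod q => a ≠ 0 ∧ π a = t).card := by
    apply Finset.card_bij (fun p _ => f p)
    · intro p hp
      simp only [mem_filter, mem_univ, true_and] at hp ⊢
      refine ⟨?_, hp.2⟩
      have : f p ∈ (fun p : ℤ × ZMod q => (p.1 : ZMod q) * p.2) '' ↑(M ×ˢ S) :=
        ⟨p, by exact_mod_cast hp.1, rfl⟩
      rw [hS.2.2] at this
      exact this
    · intro p₁ hp₁ p₂ hp₂ h
      simp only [mem_filter] at hp₁ hp₂
      exact hS.2.1 (Finset.mem_coe.2 hp₁.1) (Finset.mem_coe.2 hp₂.1) h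
    · intro b hb
      simp only [mem_filter, mem_univ, true_and] at hb
      have : b ∈ (fun p : ℤ × ZMod q => (p.1 : ZMod q) * p.2) '' ↑(M ×ˢ S) := by
        rw [hS.2.2]; exact hb.1
      obtain ⟨p, hp, hpb⟩ := this
      exact ⟨p, by simp only [mem_filter]; exact ⟨Finset.mem_coe.1 hp, by rw [show π (f p) = π b from congrArg π hpb, hb.2]⟩, hpb⟩
  -- Step C: fiber cardinality
  have hC : (univ.filter fun a : ZMod q => π a = t).card = q / k := fiber_card q k hd t
  rw [← hA, hB]
  by_cases ht : t = 0
  · subst ht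
    rw [if_pos rfl]
    have h0 : (0 : ZMod q) ∈ univ.filter fun a : ZMod q => π a = 0 := by
      simp [map_zero]
    have he : (univ.filter fun a : ZMod q => a ≠ 0 ∧ π a = 0)
        = (univ.filter fun a : ZMod q => π a = 0).erase 0 := by
      ext a
      simp only [mem_filter, mem_erase, mem_univ, true_and]
    have hcard : (univ.filter fun a : ZMod q => a ≠ 0 ∧ π a = 0).card
        = (univ.filter fun a : ZMod q => π a = 0).card - 1 := by
      rw [he, Finset.card_erase_of_mem h0]
    have hpos : 0 < (univ.filter fun a : ZMod q => π a = 0).card :=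
      Finset.card_pos.2 ⟨0, h0⟩
    omega
  · rw [if_neg ht, add_zero, ← hC]
    congr 1
    ext a
    simp only [mem_filter, mem_univ, true_and, and_iff_right_iff_imp]
    intro ha h0
    subst h0
    rw [map_zero] at ha
    exact ht ha.symm


lemma step3 (q : ℕ) [NeZero q] (h3 : 3 ∣ q) (S : Finset (ZMod q))
    (hS : IsSplitting q ({-1,1,2,3} : Finset ℤ) S) : 9 ∣ q := by
  classical
  set π := ZMod.castHom h3 (ZMod 3) with hπ
  have key : ∀ (t : ZMod 3) (G : Finset (ℤ × ZMod 3)),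
      ((({-1,1,2,3} : Finset ℤ) ×ˢ univ).filter fun p => (p.1 : ZMod 3) * p.2 = t) = G →
      ∀ v : ℕ, (if t = 0 then 1 else 0) = v →
      (∑ p ∈ G, (S.filter fun s => π s = p.2).card) + v = q / 3 := by
    intro t G hG v hv
    rw [← hG, ← hv]
    exact count_key q 3 h3 _ S hS t
  have h0 := key 0 {(-1,0),(1,0),(2,0),(3,0),(3,1),(3,2)} (by decide) 1 (by decide)
  have h1 := key 1 {(-1,2),(1,1),(2,2)} (by decide) 0 (by decide)
  have h2 := key 2 {(-1,1),(1,2),(2,1)} (by decide) 0 (by decide)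
  rw [Finset.sum_insert (by decide), Finset.sum_insert (by decide),
    Finset.sum_insert (by decide), Finset.sum_insert (by decide),
    Finset.sum_insert (by decide), Finset.sum_singleton] at h0
  rw [Finset.sum_insert (by decide), Finset.sum_insert (by decide),
    Finset.sum_singleton] at h1
  rw [Finset.sum_insert (by decide), Finset.sum_insert (by decide),
    Finset.sum_singleton] at h2
  simp only [show ∀ (a : ℤ) (b : ZMod 3), (Prod.mk a b).2 = b from fun _ _ => rfl]
    at h0 h1 h2
  omega


set_option maxHeartbeats 1600000 in
lemma step9 (q : ℕ) [NeZero q] (h9 : 9 ∣ q) (S : Finset (ZMod q))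
    (hS : IsSplitting q ({-1,1,2,3} : Finset ℤ) S) :
    27 ∣ q ∧ ∀ s ∈ S, ZMod.castHom h9 (ZMod 9) s ≠ 3 ∧ ZMod.castHom h9 (ZMod 9) s ≠ 6 := by
  classical
  set π := ZMod.castHom h9 (ZMod 9) with hπ
  have key : ∀ (t : ZMod 9) (G : Finset (ℤ × ZMod 9)),
      ((({-1,1,2,3} : Finset ℤ) ×ˢ univ).filter fun p => (p.1 : ZMod 9) * p.2 = t) = G →
      ∀ v : ℕ, (if t = 0 then 1 else 0) = v →
      (∑ p ∈ G, (S.filter fun s => π s = p.2).card) + v = q / 9 := by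
    intro t G hG v hv
    rw [← hG, ← hv]
    exact count_key q 9 h9 _ S hS t
  have h0 := key 0 {(-1,0),(1,0),(2,0),(3,0),(3,3),(3,6)} (by decide) 1 (by decide)
  have h1 := key 1 {(-1,8),(1,1),(2,5)} (by decide) 0 (by decide)
  have h2 := key 2 {(-1,7),(1,2),(2,1)} (by decide) 0 (by decide)
  have h3 := key 3 {(-1,6),(1,3),(2,6),(3,1),(3,4),(3,7)} (by decide) 0 (by decide)
  have h4 := key 4 {(-1,5),(1,4),(2,2)} (by decide) 0 (by decide)
  have h5 := key 5 {(-1,4),(1,5),(2,7)} (by decide) 0 (by decide)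
  have h6 := key 6 {(-1,3),(1,6),(2,3),(3,2),(3,5),(3,8)} (by decide) 0 (by decide)
  have h7 := key 7 {(-1,2),(1,7),(2,8)} (by decide) 0 (by decide)
  have h8 := key 8 {(-1,1),(1,8),(2,4)} (by decide) 0 (by decide)
  rw [Finset.sum_insert (by decide), Finset.sum_insert (by decide),
    Finset.sum_insert (by decide), Finset.sum_insert (by decide),
    Finset.sum_insert (by decide), Finset.sum_singleton] at h0
  rw [Finset.sum_insert (by decide), Finset.sum_insert (by decide),
    Finset.sum_singleton] at h1
  rw [Finset.sum_insert (by decide), Finset.sum_insert (by decide),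
    Finset.sum_singleton] at h2
  rw [Finset.sum_insert (by decide), Finset.sum_insert (by decide),
    Finset.sum_insert (by decide), Finset.sum_insert (by decide),
    Finset.sum_insert (by decide), Finset.sum_singleton] at h3
  rw [Finset.sum_insert (by decide), Finset.sum_insert (by decide),
    Finset.sum_singleton] at h4
  rw [Finset.sum_insert (by decide), Finset.sum_insert (by decide),
    Finset.sum_singleton] at h5
  rw [Finset.sum_insert (by decide), Finset.sum_insert (by decide),
    Finset.sum_insert (by decide), Finset.sum_insert (by decide),
    Finset.sum_insert (by decide), Finset.sum_singleton] at h6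
  rw [Finset.sum_insert (by decide), Finset.sum_insert (by decide),
    Finset.sum_singleton] at h7
  rw [Finset.sum_insert (by decide), Finset.sum_insert (by decide),
    Finset.sum_singleton] at h8
  simp only [show ∀ (a : ℤ) (b : ZMod 9), (Prod.mk a b).2 = b from fun _ _ => rfl]
    at h0 h1 h2 h3 h4 h5 h6 h7 h8
  refine ⟨by omega, ?_⟩
  have hc3 : (S.filter fun s => π s = 3).card = 0 := by omega
  have hc6 : (S.filter fun s => π s = 6).card = 0 := by omega
  intro s hs
  constructor
  · intro hval
    have : s ∈ S.filter fun s => π s = 3 := Finset.mem_filter.2 ⟨hs, hval⟩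
    rw [Finset.card_eq_zero] at hc3
    simp [hc3] at this
  · intro hval
    have : s ∈ S.filter fun s => π s = 6 := Finset.mem_filter.2 ⟨hs, hval⟩
    rw [Finset.card_eq_zero] at hc6
    simp [hc6] at this


section Descent

variable (N : ℕ) [NeZero N]

/-- the embedding `ZMod N → ZMod (9*N)` sending `x` to `9x`. -/
noncomputable def emb (x : ZMod N) : ZMod (9 * N) := ((9 * x.val : ℕ) : ZMod (9 * N))

lemma emb_val (x : ZMod N) : (emb N x).val = 9 * x.val := by
  haveI : NeZero (9 * N) := ⟨by have := NeZero.ne N; positivity⟩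
  exact ZMod.val_cast_of_lt (by have := ZMod.val_lt x; omega)

lemma emb_inj : Function.Injective (emb N) := by
  haveI : NeZero (9 * N) := ⟨by have := NeZero.ne N; positivity⟩
  intro x y h
  apply ZMod.val_injective
  have := congrArg ZMod.val h
  rw [emb_val, emb_val] at this
  omega

lemma emb_zero : emb N 0 = 0 := by
  simp [emb]

lemma emb_mul (m : ℤ) (x : ZMod N) :
    (m : ZMod (9 * N)) * emb N x = emb N ((m : ZMod N) * x) := by
  haveI : NeZero (9 * N) := ⟨by have := NeZero.ne N; positivity⟩
  set w := ((m : ZMod N) * x).val with hw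
  have h1 : ((w : ℤ) : ZMod N) = ((m * (x.val : ℤ) : ℤ) : ZMod N) := by
    push_cast
    rw [ZMod.natCast_val, ZMod.cast_id, ZMod.natCast_val, ZMod.cast_id]
  have h2 : (w : ℤ) ≡ m * (x.val : ℤ) [ZMOD (N : ℤ)] :=
    (ZMod.intCast_eq_intCast_iff _ _ _).1 h1
  have h3 : 9 * (w : ℤ) ≡ 9 * (m * (x.val : ℤ)) [ZMOD ((9 : ℤ) * N)] :=
    Int.ModEq.mul_left' h2
  have h4 : ((9 * (w : ℤ) : ℤ) : ZMod (9 * N)) = ((9 * (m * (x.val : ℤ)) : ℤ) : ZMod (9 * N)) := by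
    rw [ZMod.intCast_eq_intCast_iff]
    have : ((9 * N : ℕ) : ℤ) = (9 : ℤ) * N := by push_cast; ring
    rw [this]
    exact h3
  have e1 : emb N ((m : ZMod N) * x) = ((9 * (w : ℤ) : ℤ) : ZMod (9 * N)) := by
    rw [emb, ← hw]; push_cast; ring_nf
  have e2 : (m : ZMod (9 * N)) * emb N x = ((9 * (m * (x.val : ℤ)) : ℤ) : ZMod (9 * N)) := by
    rw [emb]; push_cast; ring
  rw [e1, e2, h4]

lemma emb_surj_ker (y : ZMod (9 * N))
    (hy : ZMod.castHom (dvd_mul_right 9 N) (ZMod 9) y = 0) : ∃ x, emb N x = y := by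
  haveI : NeZero (9 * N) := ⟨by have := NeZero.ne N; positivity⟩
  have hv : ((y.val : ℕ) : ZMod 9) = 0 := by
    rw [ZMod.natCast_val, ← ZMod.castHom_apply (h := dvd_mul_right 9 N), hy]
  rw [ZMod.natCast_eq_zero_iff] at hv
  obtain ⟨c, hc⟩ := hv
  refine ⟨((c : ℕ) : ZMod N), ?_⟩
  apply ZMod.val_injective
  rw [emb_val]
  have hylt : y.val < 9 * N := ZMod.val_lt y
  have hcv : (((c : ℕ) : ZMod N)).val = c := ZMod.val_cast_of_lt (by omega)
  rw [hcv, ← hc]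

lemma emb_pi_zero (x : ZMod N) :
    ZMod.castHom (dvd_mul_right 9 N) (ZMod 9) (emb N x) = 0 := by
  rw [emb, map_natCast]
  simp [Nat.cast_mul, show ((9:ℕ) : ZMod 9) = 0 from by decide,
    show (9 : ZMod 9) = 0 from by decide]

lemma descent (S : Finset (ZMod (9 * N)))
    (hS : IsSplitting (9 * N) ({-1,1,2,3} : Finset ℤ) S)
    (hpure : ∀ s ∈ S, ZMod.castHom (dvd_mul_right 9 N) (ZMod 9) s ≠ 3 ∧
      ZMod.castHom (dvd_mul_right 9 N) (ZMod 9) s ≠ 6) :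
    ∃ S' : Finset (ZMod N), IsSplitting N ({-1,1,2,3} : Finset ℤ) S' := by
  classical
  haveI : NeZero (9 * N) := ⟨by have := NeZero.ne N; positivity⟩
  set π := ZMod.castHom (dvd_mul_right 9 N) (ZMod 9) with hπ
  set S' : Finset (ZMod N) := univ.filter (fun x => emb N x ∈ S) with hS'
  refine ⟨S', ?_, ?_, ?_⟩
  · decide
  · rintro ⟨m₁, x₁⟩ hp₁ ⟨m₂, x₂⟩ hp₂ h
    have hm₁ : m₁ ∈ ({-1,1,2,3} : Finset ℤ) := (Finset.mem_product.1 (Finset.mem_coe.1 hp₁)).1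
    have hx₁ : emb N x₁ ∈ S :=
      (Finset.mem_filter.1 ((Finset.mem_product.1 (Finset.mem_coe.1 hp₁)).2)).2
    have hm₂ : m₂ ∈ ({-1,1,2,3} : Finset ℤ) := (Finset.mem_product.1 (Finset.mem_coe.1 hp₂)).1
    have hx₂ : emb N x₂ ∈ S :=
      (Finset.mem_filter.1 ((Finset.mem_product.1 (Finset.mem_coe.1 hp₂)).2)).2
    simp only at h
    have h' : (m₁ : ZMod (9 * N)) * emb N x₁ = (m₂ : ZMod (9 * N)) * emb N x₂ := by
      rw [emb_mul, emb_mul, h]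
    have h'' : (fun p : ℤ × ZMod (9 * N) => (p.1 : ZMod (9 * N)) * p.2) (m₁, emb N x₁)
        = (fun p : ℤ × ZMod (9 * N) => (p.1 : ZMod (9 * N)) * p.2) (m₂, emb N x₂) := h'
    have := hS.2.1 (Finset.mem_coe.2 (Finset.mem_product.2 ⟨hm₁, hx₁⟩))
      (Finset.mem_coe.2 (Finset.mem_product.2 ⟨hm₂, hx₂⟩)) h''
    have h1 := congrArg Prod.fst this
    have h2 := congrArg Prod.snd this
    simp only at h1 h2
    rw [Prod.ext_iff]
    exact ⟨h1, emb_inj N h2⟩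
  · ext a
    simp only [Set.mem_image, Finset.mem_coe, Finset.mem_product, Set.mem_setOf_eq]
    constructor
    · rintro ⟨⟨m, x⟩, ⟨hm, hx⟩, rfl⟩
      simp only [hS', Finset.mem_filter] at hx
      intro h0
      have h0' : (m : ZMod (9 * N)) * emb N x = 0 := by
        rw [emb_mul, h0, emb_zero]
      have hmem : (0 : ZMod (9 * N)) ∈ (fun p : ℤ × ZMod (9 * N) => (p.1 : ZMod (9 * N)) * p.2)
          '' ↑(({-1,1,2,3} : Finset ℤ) ×ˢ S) :=
        ⟨(m, emb N x), Finset.mem_coe.2 (Finset.mem_product.2 ⟨hm, hx.2⟩), h0'⟩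
      rw [hS.2.2] at hmem
      exact hmem rfl
    · intro ha
      have hea : emb N a ≠ 0 := fun h => ha (emb_inj N (h.trans (emb_zero N).symm))
      have : emb N a ∈ (fun p : ℤ × ZMod (9 * N) => (p.1 : ZMod (9 * N)) * p.2)
          '' ↑(({-1,1,2,3} : Finset ℤ) ×ˢ S) := by rw [hS.2.2]; exact hea
      obtain ⟨⟨m, s⟩, hms, heq⟩ := this
      simp only [Finset.mem_coe, Finset.mem_product] at hms
      simp only at heq
      -- show π s = 0
      have hps : π s = 0 := by
        have h9a : π (emb N a) = 0 := emb_pi_zero N a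
        have hms' : (m : ZMod 9) * π s = 0 := by
          rw [← map_intCast π m, ← map_mul, heq, h9a]
        have hm4 : m = -1 ∨ m = 1 ∨ m = 2 ∨ m = 3 := by
          simpa [Finset.mem_insert, Finset.mem_singleton] using hms.1
        rcases hm4 with rfl | rfl | rfl | rfl
        · have : (-1 : ZMod 9) * π s = 0 := by exact_mod_cast hms'
          have h' : ∀ y : ZMod 9, (-1 : ZMod 9) * y = 0 → y = 0 := by decide
          exact h' _ this
        · have : (1 : ZMod 9) * π s = 0 := by exact_mod_cast hms'
          simpa using this
        · have : (2 : ZMod 9) * π s = 0 := by exact_mod_cast hms'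
          have h' : ∀ y : ZMod 9, (2 : ZMod 9) * y = 0 → y = 0 := by decide
          exact h' _ this
        · have : (3 : ZMod 9) * π s = 0 := by exact_mod_cast hms'
          have h' : ∀ y : ZMod 9, (3 : ZMod 9) * y = 0 → y = 0 ∨ y = 3 ∨ y = 6 := by decide
          rcases h' _ this with h | h | h
          · exact h
          · exact absurd h (hpure s hms.2).1
          · exact absurd h (hpure s hms.2).2
      obtain ⟨x, hx⟩ := emb_surj_ker N s hps
      refine ⟨(m, x), ⟨hms.1, ?_⟩, ?_⟩
      · simp only [hS', Finset.mem_filter, Finset.mem_univ, true_and]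
        rw [hx]; exact hms.2
      · apply emb_inj N
        rw [← emb_mul, hx, heq]

end Descent

lemma no_splitting : ∀ q : ℕ, 0 < q → 3 ∣ q →
    ∀ S : Finset (ZMod q), ¬ IsSplitting q ({-1,1,2,3} : Finset ℤ) S := by
  intro q
  induction q using Nat.strong_induction_on with
  | _ q ih =>
    intro hq h3 S hS
    haveI : NeZero q := ⟨hq.ne'⟩
    have h9 := step3 q h3 S hS
    obtain ⟨h27, hpure⟩ := step9 q h9 S hS
    obtain ⟨N, rfl⟩ := h9
    haveI : NeZero N := ⟨by rintro rfl; simp at hq⟩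
    obtain ⟨S', hS'⟩ := descent N S hS (fun s hs => hpure s hs)
    exact ih N (by omega) (by omega) (by omega) S' hS'

end Split19

theorem stmt_19 (n : ℕ) (hn : 2 < n) (hmod : n % 9 = 2) :
    ¬ ∃ S : Finset (ZMod (4 * n + 1)),
        IsSplitting (4 * n + 1) ({-1, 1, 2, 3} : Finset ℤ) S ∧ S.card = n := by
  rintro ⟨S, hSpl, -⟩
  exact Split19.no_splitting (4 * n + 1) (by omega) (by omega) S hSpl
end
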